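/- arXiv:math/0107104 — 7 statements merged into one kernel-verified Lean document; each statement's English description precedes it below -/
import Mathlib

section
/- Let R be a unital ring with ideal I which is a QB-ideal of R, and let e be an idempotent of R. Then eIe is a QB-ideal of the unital ring eRe. -/
section
variable {R : Type*} [Ring R]

/-- `x` and `y` are centrally orthogonal: `xRy = 0 = yRx`. -/
def CentOrth (x y : R) : Prop := ∀ r : R, x * r * y = 0 ∧ y * r * x = 0

/-- `u` is quasi-invertible in `R`. -/
def QuasiInv (u : R) : Prop := ∃ v : R, CentOrth (1 - u * v) (1 - v * u)

/-- A two-sided ideal `I` of a unital ring `R` is a QB-ideal if whenever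
`xa - x - a + b = 0` with `x, a, b ∈ I` there is `y ∈ I` with `1 - (a - yb)`
quasi-invertible in `R`. -/
def IsQBIdeal (I : TwoSidedIdeal R) : Prop :=
  ∀ x a b : R, x ∈ I → a ∈ I → b ∈ I → x * a - x - a + b = 0 →
    ∃ y ∈ I, QuasiInv (1 - (a - y * b))

/-- An element `u` of the corner ring `eRe` (with unit `e`) is quasi-invertible there. -/
def CornerQuasiInv (e u : R) : Prop :=
  ∃ v : R, v = e * v * e ∧
    ∀ r : R, (e - u * v) * (e * r * e) * (e - v * u) = 0 ∧
      (e - v * u) * (e * r * e) * (e - u * v) = 0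

/-- If `I` is a QB-ideal of `R` and `e` is an idempotent, then `eIe` is a QB-ideal of
the unital ring `eRe`. -/
theorem corner_of_QBIdeal (I : TwoSidedIdeal R) (hI : IsQBIdeal I)
    (e : R) (he : e * e = e) :
    ∀ x a b : R, x ∈ I → a ∈ I → b ∈ I →
      x = e * x * e → a = e * a * e → b = e * b * e →
      x * a - x - a + b = 0 →
      ∃ y, y ∈ I ∧ y = e * y * e ∧ CornerQuasiInv e (e - (a - y * b)) := by
  intro x a b hx ha hb hex hea heb heq
  obtain ⟨y₁, hy₁, v, hv⟩ := hI x a b hx ha hb heq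
  generalize hu : 1 - (a - y₁ * b) = u at hv
  -- basic corner facts
  have corner_fix : ∀ z : R, e * (e * z * e) * e = e * z * e := by
    intro z
    have h : e * (e * z * e) * e = (e * e) * z * (e * e) := by noncomm_ring
    rw [h, he]
  have hea' : e * a = a := by
    conv_lhs => rw [hea]
    rw [← mul_assoc, ← mul_assoc, he, ← hea]
  have hae' : a * e = a := by
    conv_lhs => rw [hea]
    rw [mul_assoc, he, ← hea]
  have heb' : e * b = b := by
    conv_lhs => rw [heb]
    rw [← mul_assoc, ← mul_assoc, he, ← heb]
  have hbe' : b * e = b := by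
    conv_lhs => rw [heb]
    rw [mul_assoc, he, ← heb]
  have hef : e * (1 - e) = 0 := by rw [mul_sub, mul_one, he, sub_self]
  have haf : a * (1 - e) = 0 := by rw [mul_sub, mul_one, hae', sub_self]
  have hbf : b * (1 - e) = 0 := by rw [mul_sub, mul_one, hbe', sub_self]
  -- u * (1-e) = 1-e
  have huf : u * (1 - e) = 1 - e := by
    rw [← hu]
    have h : (1 - (a - y₁ * b)) * (1 - e)
        = (1 - e) - a * (1 - e) + y₁ * (b * (1 - e)) := by noncomm_ring
    rw [h, haf, hbf, mul_zero]
    abel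
  -- e * u * e = e * u
  have h1 : e * u * e = e * u := by
    have h : e * u * e = e * u - e * (u * (1 - e)) := by noncomm_ring
    rw [h, huf, hef, sub_zero]
  -- u * c = c for c = (1-e) * y₁ * b
  have huc : u * ((1 - e) * y₁ * b) = (1 - e) * y₁ * b := by
    rw [← hu]
    have h : (1 - (a - y₁ * b)) * ((1 - e) * y₁ * b)
        = (1 - e) * y₁ * b - (a * (1 - e)) * (y₁ * b)
          + y₁ * ((b * (1 - e)) * (y₁ * b)) := by noncomm_ring
    rw [h, haf, hbf]
    simp
  -- u * (e - c) = e * u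
  have h2 : u * (e - (1 - e) * y₁ * b) = e * u := by
    have hl : u * (e - (1 - e) * y₁ * b) = u * e - u * ((1 - e) * y₁ * b) := by
      noncomm_ring
    rw [hl, huc, ← hu]
    have hl2 : (1 - (a - y₁ * b)) * e - (1 - e) * y₁ * b
        = e - a * e + y₁ * (b * e) - y₁ * b + e * (y₁ * b) := by noncomm_ring
    have hr2 : e * (1 - (a - y₁ * b)) = e - e * a + e * (y₁ * b) := by noncomm_ring
    rw [hl2, hr2, hae', hbe', hea']
    abel
  -- the new y and the corner element
  have h4 : e - (a - (e * y₁ * e) * b) = e * u := by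
    rw [← hu]
    have hl : e - (a - (e * y₁ * e) * b) = e - a + (e * y₁) * (e * b) := by noncomm_ring
    have hr : e * (1 - (a - y₁ * b)) = e - e * a + (e * y₁) * b := by noncomm_ring
    rw [hl, hr, heb', hea']
  have hec : e * ((1 - e) * y₁ * b) = 0 := by
    have h : e * ((1 - e) * y₁ * b) = (e * (1 - e)) * (y₁ * b) := by noncomm_ring
    rw [h, hef, zero_mul]
  refine ⟨e * y₁ * e, I.mul_mem_right _ _ (I.mul_mem_left _ _ hy₁),
    (corner_fix y₁).symm, e * v * e, (corner_fix v).symm, ?_⟩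
  intro r
  -- identify the two "defect" elements
  have hA : e - (e - (a - (e * y₁ * e) * b)) * (e * v * e)
      = e * (1 - u * v) * e := by
    have hmul : (e * u) * (e * v * e) = e * (u * v) * e := by
      have hstep : (e * u) * (e * v * e) = (e * u * e) * (v * e) := by noncomm_ring
      rw [hstep, h1]
      noncomm_ring
    have hrhs : e * (1 - u * v) * e = e * e - e * (u * v) * e := by noncomm_ring
    rw [h4, hmul, hrhs, he]
  have hB : e - (e * v * e) * (e - (a - (e * y₁ * e) * b))
      = e * (1 - v * u) * (e - (1 - e) * y₁ * b) := by
    have hmul : (e * v * e) * (e * u) = e * (v * u) * (e - (1 - e) * y₁ * b) := by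
      have hstep : (e * v * e) * (e * u) = (e * v) * ((e * e) * u) := by noncomm_ring
      rw [hstep, he, ← h2]
      noncomm_ring
    have hrhs : e * (1 - v * u) * (e - (1 - e) * y₁ * b)
        = e * e - e * ((1 - e) * y₁ * b) - e * (v * u) * (e - (1 - e) * y₁ * b) := by
      noncomm_ring
    rw [h4, hmul, hrhs, he, hec, sub_zero]
  constructor
  · rw [hA, hB]
    have h : e * (1 - u * v) * e * (e * r * e) * (e * (1 - v * u) * (e - (1 - e) * y₁ * b))
        = e * ((1 - u * v) * (e * (e * r * e) * e) * (1 - v * u)) * (e - (1 - e) * y₁ * b) := by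
      noncomm_ring
    rw [h, (hv (e * (e * r * e) * e)).1, mul_zero, zero_mul]
  · rw [hA, hB]
    have h : e * (1 - v * u) * (e - (1 - e) * y₁ * b) * (e * r * e) * (e * (1 - u * v) * e)
        = e * ((1 - v * u) * ((e - (1 - e) * y₁ * b) * (e * r * e) * e) * (1 - u * v)) * e := by
      noncomm_ring
    rw [h, (hv ((e - (1 - e) * y₁ * b) * (e * r * e) * e)).2, mul_zero, zero_mul]

end
end

section
/- Let R be a purely infinite simple unital ring. Then for any two non-zero idempotents p and q of R, p is subequivalent to q, i.e., there exist x ∈ pRq and y ∈ qRp with xy = p and yx ≤ q (yx an idempotent below q). -/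
/-!
Inside `qR` pick an infinite idempotent `e`; then `f = eq` is an infinite idempotent below `q`,
so `f = g + f₁` with `g ≠ 0` an idempotent orthogonal to `f₁ ∼ f`. Hence `f` absorbs copies of `g`:
whenever `pzp = XY` with `X ∈ pRf`, `Y ∈ fRp`, also `p(agb + z)p` factors this way, through
`X' = pag + Xy` and `Y' = gbp + xY`, where `x, y` implement `f₁ ∼ f`. By simplicity `1` is a finite
sum of terms `agb`, so `p = XY` with `X ∈ pRf`, `Y ∈ fRp`, and `YX` is an idempotent below `f ≤ q`.
-/

section
variable (R : Type*) [Ring R]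

/-- `p` is an infinite idempotent: there is an idempotent `q < p` with `q ∼ p`. -/
def IsInfiniteIdem (p : R) : Prop :=
  p * p = p ∧ p ≠ 0 ∧
    ∃ q x y : R, q * q = q ∧ q * p = q ∧ p * q = q ∧ q ≠ p ∧
      x = q * x * p ∧ y = p * y * q ∧ x * y = q ∧ y * x = p

/-- A subset is a right ideal of `R`. -/
def IsRightIdealSet (J : Set R) : Prop :=
  (0 : R) ∈ J ∧ (∀ a b, a ∈ J → b ∈ J → a + b ∈ J) ∧ ∀ a r, a ∈ J → a * r ∈ J

/-- A unital ring is purely infinite simple: it is simple and every non-zero right ideal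
contains an infinite idempotent. -/
def IsPurelyInfiniteSimple : Prop :=
  (∀ I : TwoSidedIdeal R, I = ⊥ ∨ I = ⊤) ∧
    ∀ J : Set R, IsRightIdealSet R J → (∃ z ∈ J, z ≠ 0) →
      ∃ p ∈ J, IsInfiniteIdem R p

variable {R}

lemma isRightIdealSet_setOf_mul_left_eq (q : R) : IsRightIdealSet R {z | q * z = z} :=
  ⟨mul_zero q, fun a b ha hb => by simp_all [mul_add],
    fun a r ha => by simp_all only [Set.mem_ofPred_eq, ← mul_assoc]⟩

lemma IsInfiniteIdem.mul_right {e q : R} (he : IsInfiniteIdem R e)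
    (hqe : q * e = e) : IsInfiniteIdem R (e * q) := by
  obtain ⟨hee, he0, e₁, u, v, he₁e₁, he₁e, hee₁, hne, hu, hv, huv, hvu⟩ := he
  have fix : ∀ {a}, q * a = a → ∀ b, q * (a * b) = a * b := fun h b => by rw [← mul_assoc, h]
  have hqe₁ : q * e₁ = e₁ := by rw [← hee₁, fix hqe]
  have hqu : q * u = u := by rw [hu, mul_assoc, fix hqe₁]
  have hqv : q * v = v := by rw [hv, mul_assoc, fix hqe]
  have he_eq : e = e * q * e := by rw [mul_assoc, hqe, hee]
  refine ⟨?_, fun h => he0 (by rw [he_eq, h, zero_mul]), e₁ * q, u * q, v * q, ?_, ?_, ?_,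
    fun h => hne (by simpa only [mul_assoc, hqe, he₁e, hee] using congr_arg (· * e) h),
    ?_, ?_, ?_, ?_⟩
  all_goals simp only [mul_assoc, fix hqe, fix hqe₁, fix hqu, fix hqv]
  all_goals simp only [← mul_assoc, hee, he₁e₁, he₁e, hee₁, huv, hvu, ← hu, ← hv]

-- `g ⊕ f ≲ f`: `g ≤ f`, and `x`, `y` carry `f` onto an idempotent orthogonal to `g`.
def IdemAbsorbs (f g : R) : Prop :=
  g * g = g ∧ g * f = g ∧ f * g = g ∧
    ∃ x y : R, f * x = x ∧ y * f = y ∧ y * x = f ∧ g * x = 0 ∧ y * g = 0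

lemma IsInfiniteIdem.exists_idemAbsorbs {f : R} (hf : IsInfiniteIdem R f) :
    ∃ g, g ≠ 0 ∧ IdemAbsorbs f g := by
  obtain ⟨hff, -, f₁, x, y, hf₁f₁, hf₁f, hff₁, hne, hx, hy, -, hyx⟩ := hf
  have hfx : f * x = x := by rw [hx, ← mul_assoc, ← mul_assoc, hff₁]
  have hf₁x : f₁ * x = x := by rw [hx, ← mul_assoc, ← mul_assoc, hf₁f₁]
  have hyf : y * f = y := by rw [hy, mul_assoc, hf₁f]
  have hyf₁ : y * f₁ = y := by rw [hy, mul_assoc, hf₁f₁]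
  refine ⟨f - f₁, sub_ne_zero.mpr hne.symm, ?_, ?_, ?_, x, y, hfx, hyf, hyx, ?_, ?_⟩
  · simp only [sub_mul, mul_sub, hff, hff₁, hf₁f, hf₁f₁, sub_self, sub_zero]
  · rw [sub_mul, hff, hf₁f]
  · rw [mul_sub, hff, hff₁]
  · rw [sub_mul, hfx, hf₁x, sub_self]
  · rw [mul_sub, hyf, hyf₁, sub_self]

def FactorsThrough (p f z : R) : Prop :=
  ∃ X Y : R, p * X = X ∧ X * f = X ∧ f * Y = Y ∧ Y * p = Y ∧ X * Y = p * z * p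

lemma factorsThrough_zero (p f : R) : FactorsThrough p f 0 :=
  ⟨0, 0, by simp⟩

lemma FactorsThrough.add_left {p f g z : R} (hp : p * p = p) (habs : IdemAbsorbs f g)
    (hz : FactorsThrough p f z) (a b : R) : FactorsThrough p f (a * g * b + z) := by
  obtain ⟨hgg, hgf, hfg, x, y, hfx, hyf, hyx, hgx, hyg⟩ := habs
  obtain ⟨X, Y, hpX, hXf, hfY, hYp, hXY⟩ := hz
  refine ⟨p * a * g + X * y, g * b * p + x * Y, ?_, ?_, ?_, ?_, ?_⟩
  · simp only [mul_add, ← mul_assoc, hp, hpX]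
  · simp only [add_mul, mul_assoc, hgf, hyf]
  · simp only [mul_add, ← mul_assoc, hfg, hfx]
  · simp only [add_mul, mul_assoc, hp, hYp]
  calc (p * a * g + X * y) * (g * b * p + x * Y)
      = p * a * (g * g) * b * p + p * a * (g * x) * Y + X * (y * g) * b * p + X * (y * x) * Y := by
        noncomm_ring
    _ = p * (a * g * b + z) * p := by
        rw [hgg, hgx, hyg, hyx, hXf, hXY]
        noncomm_ring

lemma factorsThrough_of_mem_span {p f g z : R} (hp : p * p = p) (habs : IdemAbsorbs f g)
    (hz : z ∈ TwoSidedIdeal.span {g}) : FactorsThrough p f z := by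
  rw [TwoSidedIdeal.mem_span_iff_mem_addSubgroup_closure] at hz
  induction hz using AddSubgroup.closure_induction_left with
  | zero => exact factorsThrough_zero p f
  | add_left w hw z _ ih =>
    obtain ⟨-, ⟨a, -, g', hg', rfl⟩, b, -, rfl⟩ := hw
    rw [Set.mem_singleton_iff.mp hg']
    exact ih.add_left hp habs a b
  | neg_add_cancel w hw z _ ih =>
    obtain ⟨-, ⟨a, -, g', hg', rfl⟩, b, -, rfl⟩ := hw
    rw [Set.mem_singleton_iff.mp hg', show -(a * g * b) = -a * g * b by noncomm_ring]
    exact ih.add_left hp habs (-a) b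

lemma one_mem_span_singleton_of_ne_zero (hR : ∀ I : TwoSidedIdeal R, I = ⊥ ∨ I = ⊤) {g : R}
    (hg : g ≠ 0) : (1 : R) ∈ TwoSidedIdeal.span {g} := by
  rcases hR (TwoSidedIdeal.span {g}) with h | h
  · exact absurd ((TwoSidedIdeal.mem_bot R).mp (h ▸ TwoSidedIdeal.subset_span rfl)) hg
  · exact h ▸ TwoSidedIdeal.mem_top R

variable (R)

theorem pis_subequivalence (hR : IsPurelyInfiniteSimple R)
    (p q : R) (hp : p * p = p) (hq : q * q = q) (hq0 : q ≠ 0) :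
    ∃ x y : R, x = p * x * q ∧ y = q * y * p ∧ x * y = p ∧
      (y * x) * (y * x) = y * x ∧ (y * x) * q = y * x ∧ q * (y * x) = y * x := by
  obtain ⟨e, hqe, he⟩ := hR.2 _ (isRightIdealSet_setOf_mul_left_eq q) ⟨q, hq, hq0⟩
  obtain ⟨g, hg0, habs⟩ := (he.mul_right hqe).exists_idemAbsorbs
  obtain ⟨X, Y, hpX, hXf, hfY, hYp, hXY⟩ :=
    factorsThrough_of_mem_span hp habs (one_mem_span_singleton_of_ne_zero hR.1 hg0)
  rw [mul_one, hp] at hXY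
  have hXq : X * q = X := by rw [← hXf, mul_assoc, mul_assoc, hq]
  have hqY : q * Y = Y := by rw [← hfY, ← mul_assoc, ← mul_assoc, hqe]
  refine ⟨X, Y, by rw [hpX, hXq], by rw [mul_assoc, hYp, hqY], hXY, ?_, by rw [mul_assoc, hXq],
    by rw [← mul_assoc, hqY]⟩
  rw [mul_assoc, ← mul_assoc X, hXY, hpX]

end
end

section
/- Let R be a unital ring which is purely infinite and simple. Then R is not a division ring, and for every non-zero element x in R there exist s, t in R with sxt = 1. Conversely, if R is a unital ring which is not a division ring and for every non-zero x there exist s, t with sxt = 1, then R is purely infinite simple. -/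
/-!
If `p ∼ q < p` through `x * y = q` and `y * x = p`, then `e = p - q` is a non-zero idempotent
with `e * x = 0 = y * e` and `y * x = p`, so `a₀ e b₀ + a b = (a₀ e + a y) (e b₀ + x b)` whenever
`p b = b`. In a simple ring `1` lies in the ideal generated by `e`; absorbing its summands one at a
time writes `1 = a p b`, and choosing `p` in `x R` gives `s x t = 1`.

Conversely, `s x t = 1` with `x` not a unit yields `v u = 1 ≠ u v`, which makes `1` infinite, and
the corner embedding `r ↦ w r s` (where `s w = 1`, `w = z t`) carries this to the idempotent
`z t s` of any right ideal containing `z ≠ 0`.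
-/

section
variable (R : Type*) [Ring R]

variable {R}

lemma isRightIdealSet_univ : IsRightIdealSet R Set.univ :=
  ⟨trivial, fun _ _ _ _ => trivial, fun _ _ _ => trivial⟩

lemma isRightIdealSet_range_mul_left (x : R) : IsRightIdealSet R (Set.range (x * ·)) :=
  ⟨⟨0, mul_zero x⟩, fun _ _ ⟨a, ha⟩ ⟨b, hb⟩ => ⟨a + b, by simp only [← ha, ← hb, mul_add]⟩,
    fun _ r ⟨a, ha⟩ => ⟨a * r, by simp only [← ha, mul_assoc]⟩⟩

lemma TwoSidedIdeal.eq_bot_or_eq_top_of_forall_ne_zero_exists_mul_mul_eq_one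
    (h : ∀ x : R, x ≠ 0 → ∃ s t : R, s * x * t = 1) (I : TwoSidedIdeal R) : I = ⊥ ∨ I = ⊤ := by
  by_cases hI : ∃ z ∈ I, z ≠ 0
  · obtain ⟨z, hzI, hz⟩ := hI
    obtain ⟨s, t, hst⟩ := h z hz
    exact .inr (I.eq_top (hst ▸ I.mul_mem_right _ _ (I.mul_mem_left _ _ hzI)))
  · push Not at hI
    exact .inl (eq_bot_iff.2 fun w hw => (TwoSidedIdeal.mem_bot R).2 (hI w hw))

lemma exists_mul_eq_of_mem_span_singleton {p e x y z : R} (hpe : p * e = e) (hee : e * e = e)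
    (hpx : p * x = x) (hex : e * x = 0) (hye : y * e = 0) (hyx : y * x = p)
    (hz : z ∈ TwoSidedIdeal.span {e}) : ∃ a b, p * b = b ∧ z = a * b := by
  have absorb : ∀ a₀ b₀ z, (∃ a b, p * b = b ∧ z = a * b) →
      ∃ a b, p * b = b ∧ a₀ * e * b₀ + z = a * b := by
    rintro a₀ b₀ _ ⟨a, b, hpb, rfl⟩
    refine ⟨a₀ * e + a * y, e * b₀ + x * b, ?_, ?_⟩
    · rw [mul_add, ← mul_assoc, ← mul_assoc, hpe, hpx]
    · simp only [add_mul, mul_add, mul_assoc]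
      rw [← mul_assoc e e, hee, ← mul_assoc e x, hex, ← mul_assoc y e, hye, ← mul_assoc y x,
        hyx, hpb]
      simp only [zero_mul, mul_zero, add_zero, zero_add]
  rw [TwoSidedIdeal.mem_span_iff_mem_addSubgroup_closure] at hz
  induction hz using AddSubgroup.closure_induction_left with
  | zero => exact ⟨0, 0, mul_zero p, (mul_zero 0).symm⟩
  | add_left _ hw _ _ ih =>
    obtain ⟨_, ⟨a₀, -, _, rfl, rfl⟩, b₀, -, rfl⟩ := hw
    exact absorb a₀ b₀ _ ih
  | neg_add_cancel _ hw _ _ ih =>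
    obtain ⟨_, ⟨a₀, -, _, rfl, rfl⟩, b₀, -, rfl⟩ := hw
    simpa only [neg_mul] using absorb (-a₀) b₀ _ ih

namespace IsInfiniteIdem

variable {p : R}

lemma exists_ne_zero_not_isUnit (hp : IsInfiniteIdem R p) : ∃ x : R, x ≠ 0 ∧ ¬IsUnit x := by
  obtain ⟨-, hp0, q, x, y, hqq, -, hpq, hqp, hx, -, -, hyx⟩ := hp
  refine ⟨q, ?_, fun hq => hqp ?_⟩
  · rintro rfl
    rw [hx, zero_mul, zero_mul, mul_zero] at hyx
    exact hp0 hyx.symm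
  · rw [← hpq, (IsIdempotentElem.iff_eq_one_of_isUnit hq).1 hqq, mul_one]

lemma exists_mul_mul_eq_one (hR : ∀ I : TwoSidedIdeal R, I = ⊥ ∨ I = ⊤)
    (hp : IsInfiniteIdem R p) : ∃ a b, a * p * b = 1 := by
  obtain ⟨hpp, -, q, x, y, hqq, hqp, hpq, hqne, hx, hy, -, hyx⟩ := hp
  have hqx : q * x = x := by rw [hx, ← mul_assoc, ← mul_assoc, hqq]
  have hpx : p * x = x := by rw [← hqx, ← mul_assoc, hpq]
  have hyq : y * q = y := by rw [hy, mul_assoc, hqq]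
  have hyp : y * p = y := by rw [← hyq, mul_assoc, hqp]
  have hspan : TwoSidedIdeal.span {p - q} = ⊤ := by
    refine (hR _).resolve_left fun hbot => hqne (sub_eq_zero.1 ?_).symm
    exact (TwoSidedIdeal.mem_bot R).1 (hbot ▸ TwoSidedIdeal.subset_span rfl)
  have hpe : p * (p - q) = p - q := by rw [mul_sub, hpp, hpq]
  have hee : (p - q) * (p - q) = p - q := by
    rw [sub_mul, hpe, mul_sub, hqp, hqq, sub_self, sub_zero]
  have hex : (p - q) * x = 0 := by rw [sub_mul, hpx, hqx, sub_self]
  have hye : y * (p - q) = 0 := by rw [mul_sub, hyp, hyq, sub_self]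
  have hone : (1 : R) ∈ TwoSidedIdeal.span {p - q} := hspan.symm ▸ trivial
  obtain ⟨a, b, hpb, hab⟩ := exists_mul_eq_of_mem_span_singleton hpe hee hpx hex hye hyx hone
  exact ⟨a, b, by rw [mul_assoc, hpb, hab]⟩

lemma map {S : Type*} [Ring S] (f : R →ₙ+* S) (hf : Function.Injective f)
    (hp : IsInfiniteIdem R p) : IsInfiniteIdem S (f p) := by
  obtain ⟨hpp, hp0, q, x, y, hqq, hqp, hpq, hqne, hx, hy, hxy, hyx⟩ := hp
  exact ⟨by rw [← map_mul, hpp], (map_ne_zero_iff f hf).2 hp0, f q, f x, f y,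
    by rw [← map_mul, hqq], by rw [← map_mul, hqp], by rw [← map_mul, hpq], hf.ne hqne,
    by rw [← map_mul, ← map_mul, ← hx], by rw [← map_mul, ← map_mul, ← hy],
    by rw [← map_mul, hxy], by rw [← map_mul, hyx]⟩

end IsInfiniteIdem

lemma not_isDedekindFiniteMonoid_of_mul_mul_eq_one {s x t : R} (hx : ¬IsUnit x)
    (h : s * x * t = 1) : ¬IsDedekindFiniteMonoid R := fun _ =>
  hx (.of_mul_eq_one (t * s) (by rw [← mul_assoc, mul_eq_one_symm (by rwa [← mul_assoc])]))

lemma isInfiniteIdem_one_of_not_isDedekindFiniteMonoid [Nontrivial R]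
    (h : ¬IsDedekindFiniteMonoid R) : IsInfiniteIdem R 1 := by
  rw [isDedekindFiniteMonoid_iff] at h
  push Not at h
  obtain ⟨v, u, hvu, huv⟩ := h
  refine ⟨mul_one 1, one_ne_zero, u * v, u, v, ?_, mul_one _, one_mul _, huv, ?_, ?_, rfl, hvu⟩
  · rw [mul_assoc, ← mul_assoc v, hvu, one_mul]
  · rw [mul_one, mul_assoc, hvu, mul_one]
  · rw [one_mul, ← mul_assoc, hvu, one_mul]

/-- For `s * w = 1`, this is an isomorphism of `R` onto the corner ring `(w * s) R (w * s)`. -/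
@[simps]
def sandwichHom {w s : R} (h : s * w = 1) : R →ₙ+* R where
  toFun r := w * r * s
  map_mul' a b := by simp only [mul_assoc, ← mul_assoc s w, h, one_mul]
  map_zero' := by rw [mul_zero, zero_mul]
  map_add' a b := by rw [mul_add, add_mul]

lemma sandwichHom_injective {w s : R} (h : s * w = 1) : Function.Injective (sandwichHom h) :=
  fun a b hab => by
    have := congrArg (fun r => s * r * w) hab
    simpa only [sandwichHom_apply, mul_assoc, ← mul_assoc s w, h, one_mul, mul_one] using this

/-- A unital ring is purely infinite simple iff it is not a division ring and every
non-zero element `x` satisfies `sxt = 1` for some `s, t`. -/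
theorem pis_characterization [Nontrivial R] :
    IsPurelyInfiniteSimple R ↔
      (¬ ∀ x : R, x ≠ 0 → IsUnit x) ∧
        ∀ x : R, x ≠ 0 → ∃ s t : R, s * x * t = 1 := by
  constructor
  · rintro ⟨hsimple, hinf⟩
    refine ⟨fun hdiv => ?_, fun x hx => ?_⟩
    · obtain ⟨p, -, hp⟩ := hinf Set.univ isRightIdealSet_univ ⟨1, trivial, one_ne_zero⟩
      obtain ⟨y, hy0, hy⟩ := hp.exists_ne_zero_not_isUnit
      exact hy (hdiv y hy0)
    · obtain ⟨_, ⟨c, rfl⟩, hp⟩ :=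
        hinf _ (isRightIdealSet_range_mul_left x) ⟨x, ⟨1, mul_one x⟩, hx⟩
      obtain ⟨a, b, hab⟩ := hp.exists_mul_mul_eq_one hsimple
      exact ⟨a, c * b, by rw [← hab, mul_assoc a x, ← mul_assoc x, ← mul_assoc]⟩
  · rintro ⟨hdiv, hinv⟩
    refine ⟨TwoSidedIdeal.eq_bot_or_eq_top_of_forall_ne_zero_exists_mul_mul_eq_one hinv,
      fun J hJ ⟨z, hzJ, hz⟩ => ?_⟩
    push Not at hdiv
    obtain ⟨x, hx0, hx⟩ := hdiv
    obtain ⟨s₀, t₀, hst₀⟩ := hinv x hx0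
    have hone := isInfiniteIdem_one_of_not_isDedekindFiniteMonoid
      (not_isDedekindFiniteMonoid_of_mul_mul_eq_one hx hst₀)
    obtain ⟨s, t, hst⟩ := hinv z hz
    have hst' : s * (z * t) = 1 := by rwa [← mul_assoc]
    refine ⟨z * t * s, hJ.2.2 _ _ (hJ.2.2 _ _ hzJ), ?_⟩
    simpa only [sandwichHom_apply, mul_one] using
      hone.map (sandwichHom hst') (sandwichHom_injective hst')

end
end

section
/- Let R be a unital exchange ring. Then R is a QB-ring if and only if for every pair of idempotents p, q in R with 1-p ∼ 1-q, either p ⊥ q or the skew corner pRq contains a quasi-invertible element (an element w ∈ pRq with y ∈ qRp such that (p - wy) ⊥ (q - yw)). -/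
section
variable {R : Type*} [Ring R]

/-- `R` is a QB-ring. -/
def IsQBRing (A : Type*) [Ring A] : Prop :=
  ∀ a b : A, (∃ r s : A, r * a + s * b = 1) →
    ∃ y : A, ∃ v : A, ∀ r : A,
      (1 - (a + y * b) * v) * r * (1 - v * (a + y * b)) = 0 ∧
      (1 - v * (a + y * b)) * r * (1 - (a + y * b) * v) = 0

/-- `R` is an exchange ring. -/
def IsExchangeRing (A : Type*) [Ring A] : Prop :=
  ∀ x : A, ∃ p : A, p * p = p ∧ (∃ s, p = x * s) ∧ ∃ t, 1 - p = (1 - x) * t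

/-- Murray–von Neumann equivalence of idempotents. -/
def IdemEquiv (e f : R) : Prop :=
  ∃ x y : R, x = e * x * f ∧ y = f * y * e ∧ x * y = e ∧ y * x = f

/-- `w` is a quasi-invertible element of the skew corner `pRq`. -/
def SkewQuasiInv (p q w : R) : Prop :=
  w = p * w * q ∧ ∃ y : R, y = q * y * p ∧ CentOrth (p - w * y) (q - y * w)

/-- Nicholson's symmetry trick, in explicit form: from right-suitability data for `x`
we produce an idempotent `e = γ*x` with `1 - e = δ*(1-x)`. -/
private lemma nicholson_symm {x p σ τ : R} (hp : p * p = p) (h1 : x * σ = p)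
    (h2 : σ * p = σ) (h3 : (1 - x) * τ = 1 - p) (h4 : τ * p = 0) :
    ∃ γ δ : R, (γ * x) * (γ * x) = γ * x ∧ 1 - γ * x = δ * (1 - x) := by
  refine ⟨1 + (σ - τ) * (1 - x), 1 - (σ - τ) * x, ?_, ?_⟩
  · have c1 : (1 - x) * (1 - (σ - τ) * x) = 1 - σ * x := by
      calc (1 - x) * (1 - (σ - τ) * x)
          = (1 - x) - σ * x + (x * σ) * x + ((1 - x) * τ) * x := by noncomm_ring
        _ = (1 - x) - σ * x + p * x + (1 - p) * x := by rw [h1, h3]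
        _ = 1 - σ * x := by noncomm_ring
    have c2 : (1 - (σ - τ) * x) * (1 - σ * x) = 1 - (σ - τ) * x := by
      calc (1 - (σ - τ) * x) * (1 - σ * x)
          = 1 - σ * x - (σ - τ) * x + (σ - τ) * (x * σ) * x := by noncomm_ring
        _ = 1 - σ * x - (σ - τ) * x + (σ * p - τ * p) * x := by rw [h1]; noncomm_ring
        _ = 1 - σ * x - (σ - τ) * x + (σ - 0) * x := by rw [h2, h4]
        _ = 1 - (σ - τ) * x := by noncomm_ring
    have cA : ((1 - (σ - τ) * x) * (1 - x)) * ((1 - (σ - τ) * x) * (1 - x))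
        = (1 - (σ - τ) * x) * (1 - x) := by
      calc ((1 - (σ - τ) * x) * (1 - x)) * ((1 - (σ - τ) * x) * (1 - x))
          = ((1 - (σ - τ) * x) * ((1 - x) * (1 - (σ - τ) * x))) * (1 - x) := by noncomm_ring
        _ = ((1 - (σ - τ) * x) * (1 - σ * x)) * (1 - x) := by rw [c1]
        _ = (1 - (σ - τ) * x) * (1 - x) := by rw [c2]
    have he : (1 + (σ - τ) * (1 - x)) * x = 1 - (1 - (σ - τ) * x) * (1 - x) := by
      noncomm_ring
    rw [he]
    calc (1 - (1 - (σ - τ) * x) * (1 - x)) * (1 - (1 - (σ - τ) * x) * (1 - x))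
        = 1 - (1 - (σ - τ) * x) * (1 - x) - (1 - (σ - τ) * x) * (1 - x)
            + ((1 - (σ - τ) * x) * (1 - x)) * ((1 - (σ - τ) * x) * (1 - x)) := by noncomm_ring
      _ = 1 - (1 - (σ - τ) * x) * (1 - x) - (1 - (σ - τ) * x) * (1 - x)
            + (1 - (σ - τ) * x) * (1 - x) := by rw [cA]
      _ = 1 - (1 - (σ - τ) * x) * (1 - x) := by abel
  · noncomm_ring

/-- A unital exchange ring is a QB-ring iff for every pair of idempotents `p, q` with
`1-p ∼ 1-q`, either `p ⊥ q` or `pRq` contains a quasi-invertible element. -/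
theorem exchange_QB_iff (hEx : IsExchangeRing R) :
    IsQBRing R ↔
      ∀ p q : R, p * p = p → q * q = q → IdemEquiv (1 - p) (1 - q) →
        CentOrth p q ∨ ∃ w : R, SkewQuasiInv p q w := by
  constructor
  · -- Forward: QB implies the idempotent condition.
    intro hQB p q hp hq hequiv
    obtain ⟨x, y, hx, hy, hxy, hyx⟩ := hequiv
    right
    -- basic orthogonality facts
    have hpp : p * (1 - p) = 0 := by rw [mul_sub, mul_one, hp, sub_self]
    have hqq : (1 - q) * q = 0 := by rw [sub_mul, one_mul, hq, sub_self]
    have hqq' : q * (1 - q) = 0 := by rw [mul_sub, mul_one, hq, sub_self]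
    have hpx : p * x = 0 := by
      conv_lhs => rw [hx]
      calc p * ((1 - p) * x * (1 - q)) = (p * (1 - p)) * (x * (1 - q)) := by noncomm_ring
        _ = 0 := by rw [hpp, zero_mul]
    have hxq : x * q = 0 := by
      conv_lhs => rw [hx]
      calc ((1 - p) * x * (1 - q)) * q = ((1 - p) * x) * ((1 - q) * q) := by noncomm_ring
        _ = 0 := by rw [hqq, mul_zero]
    have hqy : q * y = 0 := by
      conv_lhs => rw [hy]
      calc q * ((1 - q) * y * (1 - p)) = (q * (1 - q)) * (y * (1 - p)) := by noncomm_ring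
        _ = 0 := by rw [hqq', zero_mul]
    have hone : y * x + 1 * q = 1 := by rw [hyx, one_mul, sub_add_cancel]
    obtain ⟨z, v, hzv⟩ := hQB x q ⟨y, 1, hone⟩
    set u := x + z * q with hu
    -- derived multiplicative facts
    have hpu : p * u = p * (z * q) := by
      rw [hu, mul_add, ← mul_assoc, hpx, zero_add]
    have huq : u * q = z * q := by
      rw [hu, add_mul, hxq, zero_add, mul_assoc, hq]
    have hpuq : (p * u) * q = p * u := by
      rw [hpu, mul_assoc, mul_assoc, hq]
    have hxu : x = u - z * q := by rw [hu, add_sub_cancel_right]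
    have hpxy : p = 1 - x * y := by rw [hxy, sub_sub_cancel]
    -- identity (i)
    have hid1 : p - (p * u * q) * (q * v * p) = p * (1 - u * v) * p := by
      have a1 : (p * u * q) * (q * v * p) = (p * u) * (v * p) := by
        calc (p * u * q) * (q * v * p) = ((p * u) * (q * q)) * (v * p) := by noncomm_ring
          _ = ((p * u) * q) * (v * p) := by rw [hq]
          _ = (p * u) * (v * p) := by rw [hpuq]
      have a2 : p * (1 - u * v) * p = p * p - (p * u) * (v * p) := by noncomm_ring
      rw [a1, a2, hp]
    -- identity (ii)
    have f1 : (q * v) * (z * q) = (q * (v * u)) * q := by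
      rw [← huq]; noncomm_ring
    have f2 : (q * v) * x = q * (v * u) - (q * (v * u)) * q := by
      calc (q * v) * x = (q * v) * u - (q * v) * (z * q) := by rw [hxu]; noncomm_ring
        _ = (q * v) * u - (q * (v * u)) * q := by rw [f1]
        _ = q * (v * u) - (q * (v * u)) * q := by noncomm_ring
    have f3 : ((q * (v * u)) * q) * (y * (z * q)) = 0 := by
      calc ((q * (v * u)) * q) * (y * (z * q))
          = (q * (v * u)) * ((q * y) * (z * q)) := by noncomm_ring
        _ = 0 := by rw [hqy, zero_mul, mul_zero]
    have f4 : q * (y * (z * q)) = 0 := by rw [← mul_assoc, hqy, zero_mul]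
    have hid2 : q - (q * v * p) * (p * u * q) = q * (1 - v * u) * (q - y * (z * q)) := by
      have b1 : (q * v * p) * (p * u * q)
          = (q * (v * u)) * q - ((q * v) * x) * (y * (z * q)) := by
        calc (q * v * p) * (p * u * q)
            = ((q * v) * (p * p)) * (u * q) := by noncomm_ring
          _ = ((q * v) * p) * (u * q) := by rw [hp]
          _ = ((q * v) * p) * (z * q) := by rw [huq]
          _ = (q * v) * ((1 - x * y) * (z * q)) := by rw [← hpxy]; noncomm_ring
          _ = (q * v) * (z * q) - ((q * v) * x) * (y * (z * q)) := by noncomm_ring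
          _ = (q * (v * u)) * q - ((q * v) * x) * (y * (z * q)) := by rw [f1]
      rw [b1, f2]
      have exp : q * (1 - v * u) * (q - y * (z * q))
          = q * q - q * (y * (z * q)) - (q * (v * u)) * q + (q * (v * u)) * (y * (z * q)) := by
        noncomm_ring
      rw [exp, hq, f4]
      have exp2 : q - ((q * (v * u)) * q - (q * (v * u) - (q * (v * u)) * q) * (y * (z * q)))
          = q - (q * (v * u)) * q + (q * (v * u)) * (y * (z * q))
            - ((q * (v * u)) * q) * (y * (z * q)) := by noncomm_ring
      rw [exp2, f3]
      abel
    refine ⟨p * u * q, ?_, q * v * p, ?_, ?_⟩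
    · rw [show p * (p * u * q) * q = ((p * p) * u) * (q * q) from by noncomm_ring, hp, hq]
    · rw [show q * (q * v * p) * p = ((q * q) * v) * (p * p) from by noncomm_ring, hq, hp]
    · rw [hid1, hid2]
      intro r
      constructor
      · have shape : (p * (1 - u * v) * p) * r * (q * (1 - v * u) * (q - y * (z * q)))
            = p * ((1 - u * v) * (p * r * q) * (1 - v * u)) * (q - y * (z * q)) := by
          noncomm_ring
        rw [shape, (hzv (p * r * q)).1, mul_zero, zero_mul]
      · have shape : (q * (1 - v * u) * (q - y * (z * q))) * r * (p * (1 - u * v) * p)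
            = q * ((1 - v * u) * ((q - y * (z * q)) * r * p) * (1 - u * v)) * p := by
          noncomm_ring
        rw [shape, (hzv ((q - y * (z * q)) * r * p)).2, mul_zero, zero_mul]
  · -- Backward: the idempotent condition plus exchange implies QB.
    intro hRHS a b hab
    obtain ⟨r0, s0, hrs⟩ := hab
    -- exchange data for s0 * b
    obtain ⟨p0, hp0, ⟨σ', hσ'⟩, ⟨τ', hτ'⟩⟩ := hEx (s0 * b)
    have hq0 : (1 - p0) * (1 - p0) = 1 - p0 := by
      calc (1 - p0) * (1 - p0) = 1 - p0 - p0 + p0 * p0 := by noncomm_ring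
        _ = 1 - p0 := by rw [hp0]; abel
    have h1 : (s0 * b) * (σ' * p0) = p0 := by
      rw [← mul_assoc, ← hσ', hp0]
    have h2 : (σ' * p0) * p0 = σ' * p0 := by rw [mul_assoc, hp0]
    have h3 : (1 - s0 * b) * (τ' * (1 - p0)) = 1 - p0 := by
      rw [← mul_assoc, ← hτ', hq0]
    have h4 : (τ' * (1 - p0)) * p0 = 0 := by
      rw [mul_assoc, show (1 - p0) * p0 = 0 from by rw [sub_mul, one_mul, hp0, sub_self],
        mul_zero]
    obtain ⟨γ, δ, hee, hcompl⟩ := nicholson_symm hp0 h1 h2 h3 h4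
    set e := γ * (s0 * b) with hedef
    have hsb : 1 - s0 * b = r0 * a := by rw [← hrs, add_sub_cancel_right]
    have h1e : 1 - e = δ * (r0 * a) := by rw [hcompl, hsb]
    have hq1 : (1 - e) * (1 - e) = 1 - e := by
      calc (1 - e) * (1 - e) = 1 - e - e + e * e := by noncomm_ring
        _ = 1 - e := by rw [hee]; abel
    have h1ee : (1 - e) * e = 0 := by rw [sub_mul, one_mul, hee, sub_self]
    have he1e : e * (1 - e) = 0 := by rw [mul_sub, mul_one, hee, sub_self]
    set d := (1 - e) * δ with hddef
    have hd1 : d * (r0 * a) = 1 - e := by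
      rw [hddef, mul_assoc, ← h1e, hq1]
    have hd2 : (1 - e) * d = d := by
      rw [hddef, ← mul_assoc, hq1]
    set X := a * (1 - e) with hXdef
    set Y := d * r0 with hYdef
    have hYX : Y * X = 1 - e := by
      calc Y * X = (d * (r0 * a)) * (1 - e) := by rw [hXdef, hYdef]; noncomm_ring
        _ = (1 - e) * (1 - e) := by rw [hd1]
        _ = 1 - e := hq1
    have hXe : X * e = 0 := by
      rw [hXdef, mul_assoc, h1ee, mul_zero]
    have hX1e : X * (1 - e) = X := by
      rw [hXdef, mul_assoc, hq1]
    have heY : e * Y = 0 := by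
      calc e * Y = (e * (1 - e)) * (δ * r0) := by rw [hYdef, hddef]; noncomm_ring
        _ = 0 := by rw [he1e, zero_mul]
    have h1eY : (1 - e) * Y = Y := by
      rw [hYdef, ← mul_assoc, hd2]
    have hXYX : (X * Y) * X = X := by
      rw [mul_assoc, hYX, hX1e]
    have hYXY : Y * (X * Y) = Y := by
      rw [← mul_assoc, hYX, h1eY]
    have hXYidem : (X * Y) * (X * Y) = X * Y := by
      calc (X * Y) * (X * Y) = ((X * Y) * X) * Y := by noncomm_ring
        _ = X * Y := by rw [hXYX]
    have hp1 : (1 - X * Y) * (1 - X * Y) = 1 - X * Y := by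
      calc (1 - X * Y) * (1 - X * Y) = 1 - X * Y - X * Y + (X * Y) * (X * Y) := by noncomm_ring
        _ = 1 - X * Y := by rw [hXYidem]; abel
    have h11 : 1 - (1 - X * Y) = X * Y := sub_sub_cancel 1 (X * Y)
    have hequiv : IdemEquiv (1 - (1 - X * Y)) (1 - e) := by
      refine ⟨X, Y, ?_, ?_, ?_, ?_⟩
      · rw [h11, hXYX, hX1e]
      · rw [h11, h1eY, hYXY]
      · rw [h11]
      · exact hYX
    have hmain : ∃ w : R, SkewQuasiInv (1 - X * Y) e w := by
      rcases hRHS (1 - X * Y) e hp1 hee hequiv with hco | hW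
      · exact ⟨0, by simp, 0, by simp, by simpa using hco⟩
      · exact hW
    obtain ⟨w, hw, yw, hyw, hcent⟩ := hmain
    have hwe : w * e = w := by
      conv_lhs => rw [hw]
      rw [mul_assoc (((1 - X * Y)) * w) e e, hee, ← hw]
    -- orthogonality facts for the sum decomposition
    have hp1X : (1 - X * Y) * X = 0 := by
      calc (1 - X * Y) * X = X - (X * Y) * X := by noncomm_ring
        _ = 0 := by rw [hXYX, sub_self]
    have hYp1 : Y * (1 - X * Y) = 0 := by
      calc Y * (1 - X * Y) = Y - Y * (X * Y) := by noncomm_ring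
        _ = 0 := by rw [hYXY, sub_self]
    have hXyw : X * yw = 0 := by
      conv_lhs => rw [hyw]
      calc X * (e * yw * (1 - X * Y)) = ((X * e) * yw) * (1 - X * Y) := by noncomm_ring
        _ = 0 := by rw [hXe, zero_mul, zero_mul]
    have hwY : w * Y = 0 := by
      conv_lhs => rw [hw]
      calc ((1 - X * Y) * w * e) * Y = ((1 - X * Y) * w) * (e * Y) := by noncomm_ring
        _ = 0 := by rw [heY, mul_zero]
    have hYw : Y * w = 0 := by
      conv_lhs => rw [hw]
      calc Y * ((1 - X * Y) * w * e) = ((Y * (1 - X * Y)) * w) * e := by noncomm_ring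
        _ = 0 := by rw [hYp1, zero_mul, zero_mul]
    have hywX : yw * X = 0 := by
      conv_lhs => rw [hyw]
      calc (e * yw * (1 - X * Y)) * X = (e * yw) * ((1 - X * Y) * X) := by noncomm_ring
        _ = 0 := by rw [hp1X, mul_zero]
    have huv : 1 - (X + w) * (Y + yw) = (1 - X * Y) - w * yw := by
      calc 1 - (X + w) * (Y + yw)
          = 1 - X * Y - X * yw - w * Y - w * yw := by noncomm_ring
        _ = 1 - X * Y - 0 - 0 - w * yw := by rw [hXyw, hwY]
        _ = (1 - X * Y) - w * yw := by abel
    have hvu : 1 - (Y + yw) * (X + w) = e - yw * w := by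
      calc 1 - (Y + yw) * (X + w)
          = 1 - Y * X - Y * w - yw * X - yw * w := by noncomm_ring
        _ = 1 - (1 - e) - 0 - 0 - yw * w := by rw [hYw, hywX, hYX]
        _ = e - yw * w := by abel
    have hgsb : (γ * s0) * b = e := by rw [hedef, mul_assoc]
    have hsum : a + (w - a) * (γ * s0) * b = X + w := by
      calc a + (w - a) * (γ * s0) * b
          = a + (w - a) * ((γ * s0) * b) := by rw [mul_assoc]
        _ = a + (w - a) * e := by rw [hgsb]
        _ = a + (w * e - a * e) := by rw [sub_mul]
        _ = a + (w - a * e) := by rw [hwe]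
        _ = X + w := by rw [hXdef]; noncomm_ring
    refine ⟨(w - a) * (γ * s0), Y + yw, fun r => ?_⟩
    rw [hsum, huv, hvu]
    exact hcent r

end
end

section
/- Let I be a two-sided ideal of a unital ring R such that for all idempotents p, q ∈ I with 1-p ∼ 1-q, either p ⊥ q or (pRq)_q^{-1} ≠ ∅. Then for every x ∈ I such that 1 - x is a regular element of R, the element 1 - x extends to a quasi-invertible element: there exists u ∈ R_q^{-1} with (1-x)u(1-x) = 1-x. -/
section
variable {R : Type*} [Ring R]

/-- If for all idempotents `p, q ∈ I` with `1-p ∼ 1-q` either `p ⊥ q` or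
`(pRq)_q⁻¹ ≠ ∅`, then for every `x ∈ I` with `1 - x` regular, `1 - x` extends to a
quasi-invertible element. -/
theorem regular_extends_quasiInvertible (I : TwoSidedIdeal R)
    (hyp : ∀ p q : R, p ∈ I → q ∈ I → p * p = p → q * q = q →
      IdemEquiv (1 - p) (1 - q) →
      CentOrth p q ∨ ∃ w : R, SkewQuasiInv p q w)
    (x : R) (hx : x ∈ I) (hreg : ∃ y : R, (1 - x) * y * (1 - x) = 1 - x) :
    ∃ u : R, QuasiInv u ∧ (1 - x) * u * (1 - x) = 1 - x := by
  obtain ⟨b₀, hb₀⟩ := hreg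
  obtain ⟨a, ha_def⟩ : ∃ a : R, a = 1 - x := ⟨_, rfl⟩
  rw [← ha_def] at hb₀ ⊢
  have hxa : 1 - a = x := by rw [ha_def]; noncomm_ring
  obtain ⟨b, hb_def⟩ : ∃ b : R, b = b₀ * a * b₀ := ⟨_, rfl⟩
  -- basic identities
  have haba : a * b * a = a := by
    calc a * b * a = (a * b₀ * a) * (b₀ * a) := by rw [hb_def]; noncomm_ring
    _ = a * (b₀ * a) := by rw [hb₀]
    _ = a * b₀ * a := by noncomm_ring
    _ = a := hb₀
  have hbab : b * a * b = b := by
    calc b * a * b = b₀ * (a * b₀ * a) * (b₀ * a * b₀) := by rw [hb_def]; noncomm_ring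
    _ = b₀ * a * (b₀ * a * b₀) := by rw [hb₀]
    _ = b₀ * (a * b₀ * a) * b₀ := by noncomm_ring
    _ = b₀ * a * b₀ := by rw [hb₀]
    _ = b := hb_def.symm
  obtain ⟨p, hp_def⟩ : ∃ p : R, p = 1 - a * b := ⟨_, rfl⟩
  obtain ⟨q, hq_def⟩ : ∃ q : R, q = 1 - b * a := ⟨_, rfl⟩
  have habab : a * b * (a * b) = a * b := by rw [← mul_assoc, haba]
  have hbaba : b * a * (b * a) = b * a := by rw [← mul_assoc, hbab]
  have hpp : p * p = p := by
    calc p * p = 1 - a * b - a * b + a * b * (a * b) := by rw [hp_def]; noncomm_ring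
    _ = p := by rw [habab, hp_def]; noncomm_ring
  have hqq : q * q = q := by
    calc q * q = 1 - b * a - b * a + b * a * (b * a) := by rw [hq_def]; noncomm_ring
    _ = q := by rw [hbaba, hq_def]; noncomm_ring
  have hpa : p * a = 0 := by
    calc p * a = a - a * b * a := by rw [hp_def]; noncomm_ring
    _ = 0 := by rw [haba, sub_self]
  have haq : a * q = 0 := by
    calc a * q = a - a * b * a := by rw [hq_def]; noncomm_ring
    _ = 0 := by rw [haba, sub_self]
  have hqb : q * b = 0 := by
    calc q * b = b - b * a * b := by rw [hq_def]; noncomm_ring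
    _ = 0 := by rw [hbab, sub_self]
  have hbp : b * p = 0 := by
    calc b * p = b - b * a * b := by rw [hp_def]; noncomm_ring
    _ = 0 := by rw [hbab, sub_self]
  -- memberships
  have hb₀I : 1 - b₀ ∈ I := by
    have h1 : 1 - b₀ =
        (1 - a) - (1 - a) * b₀ - b₀ * (1 - a) + (1 - a) * b₀ * (1 - a)
          - (a * b₀ * a - a) := by noncomm_ring
    rw [hb₀, sub_self, sub_zero, hxa] at h1
    rw [h1]
    exact I.add_mem (I.sub_mem (I.sub_mem hx (I.mul_mem_right _ _ hx))
      (I.mul_mem_left _ _ hx)) (I.mul_mem_right _ _ (I.mul_mem_right _ _ hx))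
  have hbI : 1 - b ∈ I := by
    have h1 : 1 - b = (1 - b₀) + b₀ * (1 - b₀) + b₀ * (1 - a) * b₀ := by
      rw [hb_def]; noncomm_ring
    rw [h1, hxa]
    exact I.add_mem (I.add_mem hb₀I (I.mul_mem_left _ _ hb₀I))
      (I.mul_mem_right _ _ (I.mul_mem_left _ _ hx))
  have hpI : p ∈ I := by
    have h1 : p = (1 - b) + (1 - a) * b := by rw [hp_def]; noncomm_ring
    rw [h1, hxa]
    exact I.add_mem hbI (I.mul_mem_right _ _ hx)
  have hqI : q ∈ I := by
    have h1 : q = (1 - b) + b * (1 - a) := by rw [hq_def]; noncomm_ring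
    rw [h1, hxa]
    exact I.add_mem hbI (I.mul_mem_left _ _ hx)
  -- equivalence of 1-p and 1-q
  have hequiv : IdemEquiv (1 - p) (1 - q) := by
    have hep : 1 - p = a * b := by rw [hp_def]; noncomm_ring
    have heq : 1 - q = b * a := by rw [hq_def]; noncomm_ring
    rw [hep, heq]
    exact ⟨a, b, by rw [haba, ← mul_assoc, haba], by rw [hbab, ← mul_assoc, hbab],
      rfl, rfl⟩
  rcases hyp p q hpI hqI hpp hqq hequiv with horth | ⟨w, hw, y, hy, horth⟩
  · refine ⟨b, ⟨a, ?_⟩, haba⟩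
    rw [← hq_def, ← hp_def]
    exact fun r => ⟨(horth r).2, (horth r).1⟩
  · have hbw : b * w = 0 := by
      rw [hw, ← mul_assoc, ← mul_assoc, hbp, zero_mul, zero_mul]
    have hya : y * a = 0 := by rw [hy, mul_assoc, hpa, mul_zero]
    have hay : a * y = 0 := by
      rw [hy, ← mul_assoc, ← mul_assoc, haq, zero_mul, zero_mul]
    have hwb : w * b = 0 := by rw [hw, mul_assoc, hqb, mul_zero]
    refine ⟨b + y, ⟨a + w, ?_⟩, ?_⟩
    · have e1 : 1 - (b + y) * (a + w) = q - y * w := by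
        calc 1 - (b + y) * (a + w) = 1 - b * a - b * w - y * a - y * w := by noncomm_ring
        _ = q - y * w := by rw [hbw, hya, hq_def]; noncomm_ring
      have e2 : 1 - (a + w) * (b + y) = p - w * y := by
        calc 1 - (a + w) * (b + y) = 1 - a * b - a * y - w * b - w * y := by noncomm_ring
        _ = p - w * y := by rw [hay, hwb, hp_def]; noncomm_ring
      rw [e1, e2]
      exact fun r => ⟨(horth r).2, (horth r).1⟩
    · calc a * (b + y) * a = a * b * a + a * y * a := by noncomm_ring
      _ = a := by rw [haba, hay, zero_mul, add_zero]

end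
end

section
/- Let I be a purely infinite, simple two-sided ideal of a unital ring R, and suppose I is an exchange ring. Then I is a QB-ideal of R. -/
set_option linter.unusedSectionVars false


section
variable {R : Type*} [Ring R]

/-- `p` is an infinite idempotent with all witnesses inside the subset `I`. -/
def IsInfiniteIdemIn (I : Set R) (p : R) : Prop :=
  p * p = p ∧ p ≠ 0 ∧ p ∈ I ∧
    ∃ q x y : R, q ∈ I ∧ x ∈ I ∧ y ∈ I ∧ q * q = q ∧ q * p = q ∧ p * q = q ∧ q ≠ p ∧
      x = q * x * p ∧ y = p * y * q ∧ x * y = q ∧ y * x = p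

/-- `J` is a right ideal of the (non-unital) ring `I`. -/
def IsRightIdealOf (I J : Set R) : Prop :=
  J ⊆ I ∧ (0 : R) ∈ J ∧ (∀ a b, a ∈ J → b ∈ J → a + b ∈ J) ∧
    ∀ a x, a ∈ J → x ∈ I → a * x ∈ J

/-- `J` is a two-sided ideal of the (non-unital) ring `I`. -/
def IsIdealOf (I J : Set R) : Prop :=
  IsRightIdealOf I J ∧ ∀ a x, a ∈ J → x ∈ I → x * a ∈ J

/-- The ring `I` is purely infinite and simple. -/
def IsPISIdeal (I : Set R) : Prop :=
  (∃ z ∈ I, z ≠ 0) ∧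
    (∀ J : Set R, IsIdealOf I J → J = {0} ∨ J = I) ∧
    ∀ J : Set R, IsRightIdealOf I J → (∃ z ∈ J, z ≠ 0) →
      ∃ p ∈ J, IsInfiniteIdemIn I p

/-- `I` is an exchange ring (non-unital formulation). -/
def IsExchangeIdeal (I : Set R) : Prop :=
  ∀ x ∈ I, ∃ p s : R, s ∈ I ∧ p = x + s - x * s ∧ p * p = p ∧ ∃ t ∈ I, p = x * t

/-! ### Auxiliary lemmas for the main theorem -/

/-- If `u` has a right inverse then it is quasi-invertible. -/
lemma quasiInv_of_right_inv {u v : R} (h : u * v = 1) : QuasiInv u := by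
  refine ⟨v, fun r => ?_⟩
  rw [h, sub_self]
  exact ⟨by rw [zero_mul, zero_mul], by rw [mul_zero]⟩

/-- If `u` has a left inverse then it is quasi-invertible. -/
lemma quasiInv_of_left_inv {u v : R} (h : v * u = 1) : QuasiInv u := by
  refine ⟨v, fun r => ?_⟩
  rw [h, sub_self]
  exact ⟨by rw [mul_zero], by rw [zero_mul, zero_mul]⟩

namespace QBaux

/-- Chain of subidempotents obtained by iterated conjugation. -/
def chainP (xh yh e : R) : ℕ → R
  | 0 => e
  | k+1 => xh * chainP xh yh e k * yh

/-- The chain of partial equivalences (first component). -/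
def chainS (xh yh e r0 : R) : ℕ → R
  | 0 => r0
  | k+1 => chainS xh yh e r0 k * (chainP xh yh e k - chainP xh yh e (k+1)) * yh

/-- The chain of partial equivalences (second component). -/
def chainT (xh yh e r0 : R) : ℕ → R
  | 0 => r0
  | k+1 => xh * (chainP xh yh e k - chainP xh yh e (k+1)) * chainT xh yh e r0 k

section chainlemmas

variable (xh yh e qe r0 : R)
variable (hee : e * e = e) (hyx : yh * xh = e) (hxy : xh * yh = qe)
variable (hex : e * xh = xh) (hxe : xh * e = xh)
variable (hye : yh * e = yh) (hey : e * yh = yh)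
variable (heqe : e * qe = qe) (hqee : qe * e = qe)

include hee hyx hex hxe hye hey in
lemma chainA : ∀ k, chainP xh yh e k * chainP xh yh e k = chainP xh yh e k ∧
    e * chainP xh yh e k = chainP xh yh e k ∧
    chainP xh yh e k * e = chainP xh yh e k := by
  intro k
  induction k with
  | zero => exact ⟨hee, hee, hee⟩
  | succ k ih =>
    obtain ⟨h1, h2, h3⟩ := ih
    set P := chainP xh yh e k with hP
    refine ⟨?_, ?_, ?_⟩
    · show (xh * P * yh) * (xh * P * yh) = xh * P * yh
      calc (xh * P * yh) * (xh * P * yh) = xh * (P * ((yh * xh) * P)) * yh := by noncomm_ring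
        _ = xh * (P * (e * P)) * yh := by rw [hyx]
        _ = xh * (P * P) * yh := by rw [h2]
        _ = xh * P * yh := by rw [h1]
    · show e * (xh * P * yh) = xh * P * yh
      calc e * (xh * P * yh) = (e * xh) * P * yh := by noncomm_ring
        _ = xh * P * yh := by rw [hex]
    · show (xh * P * yh) * e = xh * P * yh
      calc (xh * P * yh) * e = xh * P * (yh * e) := by noncomm_ring
        _ = xh * P * yh := by rw [hye]

include hee hyx hxy hex hxe hye hey heqe hqee in
lemma chainB : ∀ k, chainP xh yh e (k+1) * chainP xh yh e k = chainP xh yh e (k+1) ∧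
    chainP xh yh e k * chainP xh yh e (k+1) = chainP xh yh e (k+1) := by
  intro k
  induction k with
  | zero =>
    have h1 : chainP xh yh e 1 = qe := by
      show xh * e * yh = qe
      rw [hxe, hxy]
    constructor
    · show chainP xh yh e 1 * chainP xh yh e 0 = chainP xh yh e 1
      rw [h1]; exact hqee
    · show chainP xh yh e 0 * chainP xh yh e 1 = chainP xh yh e 1
      rw [h1]; exact heqe
  | succ k ih =>
    obtain ⟨h1, h2⟩ := ih
    obtain ⟨ha1, ha2, ha3⟩ := chainA xh yh e hee hyx hex hxe hye hey (k+1)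
    set P := chainP xh yh e k with hP
    set Q := chainP xh yh e (k+1) with hQ
    constructor
    · show (xh * Q * yh) * (xh * P * yh) = xh * Q * yh
      calc (xh * Q * yh) * (xh * P * yh) = xh * (Q * ((yh * xh) * P)) * yh := by noncomm_ring
        _ = xh * (Q * (e * P)) * yh := by rw [hyx]
        _ = xh * ((Q * e) * P) * yh := by noncomm_ring
        _ = xh * (Q * P) * yh := by rw [ha3]
        _ = xh * Q * yh := by rw [h1]
    · show (xh * P * yh) * (xh * Q * yh) = xh * Q * yh
      calc (xh * P * yh) * (xh * Q * yh) = xh * (P * ((yh * xh) * Q)) * yh := by noncomm_ring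
        _ = xh * (P * (e * Q)) * yh := by rw [hyx]
        _ = xh * (P * Q) * yh := by rw [ha2]
        _ = xh * Q * yh := by rw [h2]

include hee hyx hxy hex hxe hye hey heqe hqee in
lemma chainC : ∀ k d, chainP xh yh e (k+d) * chainP xh yh e k = chainP xh yh e (k+d) ∧
    chainP xh yh e k * chainP xh yh e (k+d) = chainP xh yh e (k+d) := by
  intro k d
  induction d with
  | zero =>
    obtain ⟨h1, -, -⟩ := chainA xh yh e hee hyx hex hxe hye hey k
    exact ⟨h1, h1⟩
  | succ d ih =>
    obtain ⟨h1, h2⟩ := ih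
    obtain ⟨hb1, hb2⟩ := chainB xh yh e qe hee hyx hxy hex hxe hye hey heqe hqee (k+d)
    have e1 : k + (d+1) = (k+d) + 1 := rfl
    constructor
    · rw [e1]
      calc chainP xh yh e ((k+d)+1) * chainP xh yh e k
          = (chainP xh yh e ((k+d)+1) * chainP xh yh e (k+d)) * chainP xh yh e k := by rw [hb1]
        _ = chainP xh yh e ((k+d)+1) * (chainP xh yh e (k+d) * chainP xh yh e k) := by
            rw [mul_assoc]
        _ = chainP xh yh e ((k+d)+1) * chainP xh yh e (k+d) := by rw [h1]
        _ = chainP xh yh e ((k+d)+1) := hb1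
    · rw [e1]
      calc chainP xh yh e k * chainP xh yh e ((k+d)+1)
          = chainP xh yh e k * (chainP xh yh e (k+d) * chainP xh yh e ((k+d)+1)) := by rw [hb2]
        _ = (chainP xh yh e k * chainP xh yh e (k+d)) * chainP xh yh e ((k+d)+1) := by
            rw [mul_assoc]
        _ = chainP xh yh e (k+d) * chainP xh yh e ((k+d)+1) := by rw [h2]
        _ = chainP xh yh e ((k+d)+1) := hb2


include hee hyx hxy hex hxe hye hey heqe hqee in
lemma chainR :
    ∀ k, (chainP xh yh e k - chainP xh yh e (k+1)) * (chainP xh yh e k - chainP xh yh e (k+1))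
          = chainP xh yh e k - chainP xh yh e (k+1) ∧
      e * (chainP xh yh e k - chainP xh yh e (k+1)) = chainP xh yh e k - chainP xh yh e (k+1) ∧
      (chainP xh yh e k - chainP xh yh e (k+1)) * e = chainP xh yh e k - chainP xh yh e (k+1) := by
  intro k
  obtain ⟨ha1, ha2, ha3⟩ := chainA xh yh e hee hyx hex hxe hye hey k
  obtain ⟨ha1', ha2', ha3'⟩ := chainA xh yh e hee hyx hex hxe hye hey (k+1)
  obtain ⟨hb1, hb2⟩ := chainB xh yh e qe hee hyx hxy hex hxe hye hey heqe hqee k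
  set P := chainP xh yh e k
  set Q := chainP xh yh e (k+1)
  refine ⟨?_, ?_, ?_⟩
  · calc (P - Q) * (P - Q) = P * P - P * Q - Q * P + Q * Q := by noncomm_ring
      _ = P - Q - Q + Q := by rw [ha1, hb2, hb1, ha1']
      _ = P - Q := by abel
  · calc e * (P - Q) = e * P - e * Q := by noncomm_ring
      _ = P - Q := by rw [ha2, ha2']
  · calc (P - Q) * e = P * e - Q * e := by noncomm_ring
      _ = P - Q := by rw [ha3, ha3']

include hee hyx hxy hex hxe hye hey heqe hqee in
lemma chainOrth :
    ∀ j k, j < k → (chainP xh yh e j - chainP xh yh e (j+1)) *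
        (chainP xh yh e k - chainP xh yh e (k+1)) = 0 ∧
      (chainP xh yh e k - chainP xh yh e (k+1)) *
        (chainP xh yh e j - chainP xh yh e (j+1)) = 0 := by
  intro j k hjk
  obtain ⟨d, hd⟩ : ∃ d, k = (j+1) + d := ⟨k - (j+1), by omega⟩
  obtain ⟨ha1, -, -⟩ := chainA xh yh e hee hyx hex hxe hye hey (j+1)
  obtain ⟨hb1, hb2⟩ := chainB xh yh e qe hee hyx hxy hex hxe hye hey heqe hqee j
  obtain ⟨hc1, hc2⟩ := chainC xh yh e qe hee hyx hxy hex hxe hye hey heqe hqee (j+1) d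
  obtain ⟨hc1', hc2'⟩ := chainC xh yh e qe hee hyx hxy hex hxe hye hey heqe hqee (j+1) (d+1)
  set P := chainP xh yh e j with hPdef
  set Q := chainP xh yh e (j+1) with hQdef
  have hkd : chainP xh yh e k = chainP xh yh e ((j+1)+d) := by rw [hd]
  have hkd1 : chainP xh yh e (k+1) = chainP xh yh e ((j+1)+(d+1)) := by
    have : k + 1 = (j+1)+(d+1) := by omega
    rw [this]
  set A := chainP xh yh e ((j+1)+d)
  set B := chainP xh yh e ((j+1)+(d+1))
  have h1 : (P - Q) * Q = 0 := by
    calc (P - Q) * Q = P * Q - Q * Q := by noncomm_ring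
      _ = Q - Q := by rw [hb2, ha1]
      _ = 0 := by abel
  have h2 : Q * (P - Q) = 0 := by
    calc Q * (P - Q) = Q * P - Q * Q := by noncomm_ring
      _ = Q - Q := by rw [hb1, ha1]
      _ = 0 := by abel
  have h3 : Q * (A - B) = A - B := by
    calc Q * (A - B) = Q * A - Q * B := by noncomm_ring
      _ = A - B := by rw [hc2, hc2']
  have h4 : (A - B) * Q = A - B := by
    calc (A - B) * Q = A * Q - B * Q := by noncomm_ring
      _ = A - B := by rw [hc1, hc1']
  constructor
  · rw [hkd, hkd1]
    calc (P - Q) * (A - B) = (P - Q) * (Q * (A - B)) := by rw [h3]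
      _ = ((P - Q) * Q) * (A - B) := by rw [mul_assoc]
      _ = 0 := by rw [h1, zero_mul]
  · rw [hkd, hkd1]
    calc (A - B) * (P - Q) = ((A - B) * Q) * (P - Q) := by rw [h4]
      _ = (A - B) * (Q * (P - Q)) := by rw [mul_assoc]
      _ = 0 := by rw [h2, mul_zero]

include hee hyx hxy hex hxe hye hey heqe hqee in
lemma chainD (hqq : qe * qe = qe) (hr0 : r0 = e - qe) :
    ∀ k, chainS xh yh e r0 k * chainT xh yh e r0 k = r0 ∧
      chainT xh yh e r0 k * chainS xh yh e r0 k = chainP xh yh e k - chainP xh yh e (k+1) ∧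
      r0 * chainS xh yh e r0 k = chainS xh yh e r0 k ∧
      chainS xh yh e r0 k * (chainP xh yh e k - chainP xh yh e (k+1)) = chainS xh yh e r0 k ∧
      (chainP xh yh e k - chainP xh yh e (k+1)) * chainT xh yh e r0 k = chainT xh yh e r0 k ∧
      chainT xh yh e r0 k * r0 = chainT xh yh e r0 k := by
  have hP1 : chainP xh yh e 1 = qe := by
    show xh * e * yh = qe
    rw [hxe, hxy]
  have hr02 : r0 * r0 = r0 := by
    rw [hr0]
    calc (e - qe) * (e - qe) = e * e - e * qe - qe * e + qe * qe := by noncomm_ring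
      _ = e - qe - qe + qe := by rw [hee, heqe, hqee, hqq]
      _ = e - qe := by abel
  have hrzero : chainP xh yh e 0 - chainP xh yh e 1 = r0 := by
    show e - chainP xh yh e 1 = r0
    rw [hP1, hr0]
  intro k
  induction k with
  | zero =>
    refine ⟨hr02, ?_, hr02, ?_, ?_, hr02⟩
    · show r0 * r0 = _
      rw [hrzero, hr02]
    · show r0 * (chainP xh yh e 0 - chainP xh yh e 1) = r0
      rw [hrzero, hr02]
    · show (chainP xh yh e 0 - chainP xh yh e 1) * r0 = r0
      rw [hrzero, hr02]
  | succ k ih =>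
    obtain ⟨hst, hts, hrs, hsr, hrt, htr⟩ := ih
    obtain ⟨hrr, her, hre⟩ := chainR xh yh e qe hee hyx hxy hex hxe hye hey heqe hqee k
    set P := chainP xh yh e k with hPdef
    set Q := chainP xh yh e (k+1) with hQdef
    set S := chainS xh yh e r0 k with hSdef
    set T := chainT xh yh e r0 k with hTdef
    have hSsucc : chainS xh yh e r0 (k+1) = S * (P - Q) * yh := rfl
    have hTsucc : chainT xh yh e r0 (k+1) = xh * (P - Q) * T := rfl
    have hrnext : chainP xh yh e (k+1) - chainP xh yh e (k+2) = xh * (P - Q) * yh := by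
      show Q - xh * Q * yh = xh * (P - Q) * yh
      have : xh * (P - Q) * yh = xh * P * yh - xh * Q * yh := by noncomm_ring
      rw [this]
      show Q - xh * Q * yh = chainP xh yh e (k+1) - xh * Q * yh
      rw [← hQdef]
    rw [hSsucc, hTsucc, hrnext]
    have key1 : (S * (P - Q) * yh) * (xh * (P - Q) * T) = S * (P - Q) * T := by
      calc (S * (P - Q) * yh) * (xh * (P - Q) * T)
          = S * ((P - Q) * ((yh * xh) * ((P - Q) * T))) := by noncomm_ring
        _ = S * ((P - Q) * (e * ((P - Q) * T))) := by rw [hyx]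
        _ = S * ((P - Q) * ((e * (P - Q)) * T)) := by rw [← mul_assoc e]
        _ = S * ((P - Q) * ((P - Q) * T)) := by rw [her]
        _ = S * (((P - Q) * (P - Q)) * T) := by rw [← mul_assoc (P - Q)]
        _ = S * ((P - Q) * T) := by rw [hrr]
        _ = S * (P - Q) * T := by rw [mul_assoc]
    refine ⟨?_, ?_, ?_, ?_, ?_, ?_⟩
    · rw [key1]
      calc S * (P - Q) * T = S * ((P - Q) * T) := by rw [mul_assoc]
        _ = S * T := by rw [hrt]
        _ = r0 := hst
    · calc (xh * (P - Q) * T) * (S * (P - Q) * yh)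
          = xh * ((P - Q) * ((T * S) * ((P - Q) * yh))) := by noncomm_ring
        _ = xh * ((P - Q) * ((P - Q) * ((P - Q) * yh))) := by rw [hts]
        _ = xh * (((P - Q) * (P - Q)) * ((P - Q) * yh)) := by rw [← mul_assoc (P-Q) (P-Q)]
        _ = xh * ((P - Q) * ((P - Q) * yh)) := by rw [hrr]
        _ = xh * (((P - Q) * (P - Q)) * yh) := by rw [← mul_assoc (P-Q) (P-Q)]
        _ = xh * ((P - Q) * yh) := by rw [hrr]
        _ = xh * (P - Q) * yh := by rw [mul_assoc]
    · calc r0 * (S * (P - Q) * yh) = (r0 * S) * ((P - Q) * yh) := by noncomm_ring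
        _ = S * ((P - Q) * yh) := by rw [hrs]
        _ = S * (P - Q) * yh := by rw [mul_assoc]
    · calc (S * (P - Q) * yh) * (xh * (P - Q) * yh)
          = S * ((P - Q) * ((yh * xh) * ((P - Q) * yh))) := by noncomm_ring
        _ = S * ((P - Q) * (e * ((P - Q) * yh))) := by rw [hyx]
        _ = S * ((P - Q) * ((e * (P - Q)) * yh)) := by rw [← mul_assoc e]
        _ = S * ((P - Q) * ((P - Q) * yh)) := by rw [her]
        _ = S * (((P - Q) * (P - Q)) * yh) := by rw [← mul_assoc (P-Q)]
        _ = S * ((P - Q) * yh) := by rw [hrr]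
        _ = S * (P - Q) * yh := by rw [mul_assoc]
    · calc (xh * (P - Q) * yh) * (xh * (P - Q) * T)
          = xh * ((P - Q) * ((yh * xh) * ((P - Q) * T))) := by noncomm_ring
        _ = xh * ((P - Q) * (e * ((P - Q) * T))) := by rw [hyx]
        _ = xh * ((P - Q) * ((e * (P - Q)) * T)) := by rw [← mul_assoc e]
        _ = xh * ((P - Q) * ((P - Q) * T)) := by rw [her]
        _ = xh * (((P - Q) * (P - Q)) * T) := by rw [← mul_assoc (P-Q)]
        _ = xh * ((P - Q) * T) := by rw [hrr]
        _ = xh * (P - Q) * T := by rw [mul_assoc]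
    · calc (xh * (P - Q) * T) * r0 = xh * ((P - Q) * (T * r0)) := by noncomm_ring
        _ = xh * ((P - Q) * T) := by rw [htr]
        _ = xh * (P - Q) * T := by rw [mul_assoc]

end chainlemmas


/-- Comparability in a purely infinite simple ideal: any idempotent `q ∈ I` embeds
into any nonzero idempotent `h ∈ I`. -/
lemma pis_comparability (I : TwoSidedIdeal R) (hPIS : IsPISIdeal (I : Set R))
    (h q : R) (hhI : h ∈ I) (hh2 : h * h = h) (hh0 : h ≠ 0)
    (hqI : q ∈ I) (hq2 : q * q = q) :
    ∃ xc yc g : R, xc * yc = q ∧ g * h = g ∧ h * g = g ∧ xc * g = xc ∧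
      g * yc = yc ∧ yc * q = yc := by
  classical
  obtain ⟨-, hsimp, hpi⟩ := hPIS
  -- The right ideal hI of I
  have hJr : IsRightIdealOf (I : Set R) {w | ∃ z ∈ (I : Set R), w = h * z} := by
    refine ⟨?_, ⟨0, I.zero_mem, (mul_zero h).symm⟩, ?_, ?_⟩
    · rintro w ⟨z, hz, rfl⟩; exact I.mul_mem_left h z hz
    · rintro a b ⟨z1, hz1, rfl⟩ ⟨z2, hz2, rfl⟩
      exact ⟨z1 + z2, I.add_mem hz1 hz2, (mul_add h z1 z2).symm⟩
    · rintro a u ⟨z, hz, rfl⟩ hu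
      exact ⟨z * u, I.mul_mem_right z u hz, mul_assoc h z u⟩
  obtain ⟨p, hpJ, hpinf⟩ := hpi _ hJr ⟨h, ⟨h, hhI, hh2.symm⟩, hh0⟩
  obtain ⟨hp2, hp0, hpI, q0, x0, y0, hq0I, hx0I, hy0I, hq02, hq0p, hpq0, hq0ne,
    hx0n, hy0n, hxy0, hyx0⟩ := hpinf
  obtain ⟨z0, hz0, hpz⟩ := hpJ
  have hhp : h * p = p := by rw [hpz, ← mul_assoc, hh2]
  -- basic normalizations
  have hx0p : x0 * p = x0 := by
    calc x0 * p = (q0 * x0 * p) * p := by rw [← hx0n]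
      _ = q0 * x0 * (p * p) := by noncomm_ring
      _ = q0 * x0 * p := by rw [hp2]
      _ = x0 := hx0n.symm
  have hq0x0 : q0 * x0 = x0 := by
    calc q0 * x0 = q0 * (q0 * x0 * p) := by rw [← hx0n]
      _ = (q0 * q0) * x0 * p := by noncomm_ring
      _ = q0 * x0 * p := by rw [hq02]
      _ = x0 := hx0n.symm
  have hpy0 : p * y0 = y0 := by
    calc p * y0 = p * (p * y0 * q0) := by rw [← hy0n]
      _ = (p * p) * y0 * q0 := by noncomm_ring
      _ = p * y0 * q0 := by rw [hp2]
      _ = y0 := hy0n.symm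
  have hy0q0 : y0 * q0 = y0 := by
    calc y0 * q0 = (p * y0 * q0) * q0 := by rw [← hy0n]
      _ = p * y0 * (q0 * q0) := by noncomm_ring
      _ = p * y0 * q0 := by rw [hq02]
      _ = y0 := hy0n.symm
  have hhq0 : h * q0 = q0 := by
    calc h * q0 = h * (p * q0) := by rw [hpq0]
      _ = (h * p) * q0 := by rw [← mul_assoc]
      _ = p * q0 := by rw [hhp]
      _ = q0 := hpq0
  have hhx0 : h * x0 = x0 := by
    calc h * x0 = h * (q0 * x0) := by rw [hq0x0]
      _ = (h * q0) * x0 := by rw [← mul_assoc]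
      _ = q0 * x0 := by rw [hhq0]
      _ = x0 := hq0x0
  have hhy0 : h * y0 = y0 := by
    calc h * y0 = h * (p * y0) := by rw [hpy0]
      _ = (h * p) * y0 := by rw [← mul_assoc]
      _ = p * y0 := by rw [hhp]
      _ = y0 := hpy0
  have hpx0 : p * x0 = x0 := by
    calc p * x0 = p * (q0 * x0) := by rw [hq0x0]
      _ = (p * q0) * x0 := by rw [← mul_assoc]
      _ = q0 * x0 := by rw [hpq0]
      _ = x0 := hq0x0
  have hy0p : y0 * p = y0 := by
    calc y0 * p = (p * y0 * q0) * p := by rw [← hy0n]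
      _ = p * y0 * (q0 * p) := by noncomm_ring
      _ = p * y0 * q0 := by rw [hq0p]
      _ = y0 := hy0n.symm
  -- transported data under h
  set e : R := p * h with hedef
  set qe : R := q0 * h with hqedef
  set xh : R := x0 * h with hxhdef
  set yh : R := y0 * h with hyhdef
  set r0 : R := e - qe with hr0def
  have hee : e * e = e := by
    calc (p * h) * (p * h) = p * (h * p) * h := by noncomm_ring
      _ = p * p * h := by rw [hhp]
      _ = p * h := by rw [hp2]
  have heh : e * h = e := by
    calc (p * h) * h = p * (h * h) := by rw [mul_assoc]
      _ = p * h := by rw [hh2]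
  have hhe : h * e = e := by
    calc h * (p * h) = (h * p) * h := by rw [← mul_assoc]
      _ = p * h := by rw [hhp]
  have hyx : yh * xh = e := by
    calc (y0 * h) * (x0 * h) = y0 * (h * x0) * h := by noncomm_ring
      _ = y0 * x0 * h := by rw [hhx0]
      _ = p * h := by rw [hyx0]
  have hxy : xh * yh = qe := by
    calc (x0 * h) * (y0 * h) = x0 * (h * y0) * h := by noncomm_ring
      _ = x0 * y0 * h := by rw [hhy0]
      _ = q0 * h := by rw [hxy0]
  have hex : e * xh = xh := by
    calc (p * h) * (x0 * h) = p * (h * x0) * h := by noncomm_ring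
      _ = p * x0 * h := by rw [hhx0]
      _ = x0 * h := by rw [hpx0]
  have hxe : xh * e = xh := by
    calc (x0 * h) * (p * h) = x0 * (h * p) * h := by noncomm_ring
      _ = x0 * p * h := by rw [hhp]
      _ = x0 * h := by rw [hx0p]
  have hye : yh * e = yh := by
    calc (y0 * h) * (p * h) = y0 * (h * p) * h := by noncomm_ring
      _ = y0 * p * h := by rw [hhp]
      _ = y0 * h := by rw [hy0p]
  have hey : e * yh = yh := by
    calc (p * h) * (y0 * h) = p * (h * y0) * h := by noncomm_ring
      _ = p * y0 * h := by rw [hhy0]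
      _ = y0 * h := by rw [hpy0]
  have heqe : e * qe = qe := by
    calc (p * h) * (q0 * h) = p * (h * q0) * h := by noncomm_ring
      _ = p * q0 * h := by rw [hhq0]
      _ = q0 * h := by rw [hpq0]
  have hqee : qe * e = qe := by
    calc (q0 * h) * (p * h) = q0 * (h * p) * h := by noncomm_ring
      _ = q0 * p * h := by rw [hhp]
      _ = q0 * h := by rw [hq0p]
  have hqq : qe * qe = qe := by
    calc (q0 * h) * (q0 * h) = q0 * (h * q0) * h := by noncomm_ring
      _ = q0 * q0 * h := by rw [hhq0]
      _ = q0 * h := by rw [hq02]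
  have hqene : qe ≠ e := by
    intro hcon
    have h1 : qe * p = q0 := by rw [hqedef, mul_assoc, hhp, hq0p]
    have h2 : e * p = p := by rw [hedef, mul_assoc, hhp, hp2]
    exact hq0ne (by rw [← h1, hcon, h2])
  have hr0ne : r0 ≠ 0 := sub_ne_zero_of_ne (Ne.symm hqene)
  have hr0I : r0 ∈ I := I.sub_mem (I.mul_mem_right p h hpI) (I.mul_mem_right q0 h hq0I)
  have hr02 : r0 * r0 = r0 := by
    rw [hr0def]
    calc (e - qe) * (e - qe) = e * e - e * qe - qe * e + qe * qe := by noncomm_ring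
      _ = e - qe - qe + qe := by rw [hee, heqe, hqee, hqq]
      _ = e - qe := by abel
  -- simplicity: the two-sided ideal generated by r0 is I
  set J2 : Set R :=
    {u | ∃ (n : ℕ) (w z : Fin n → R), (∀ i, w i ∈ (I : Set R)) ∧ (∀ i, z i ∈ (I : Set R)) ∧
      u = ∑ i, w i * r0 * z i} with hJ2def
  have hJ2 : IsIdealOf (I : Set R) J2 := by
    refine ⟨⟨?_, ?_, ?_, ?_⟩, ?_⟩
    · rintro u ⟨n, w, z, hw, hz, rfl⟩
      exact sum_mem fun i _ => I.mul_mem_right _ _ (I.mul_mem_right _ _ (hw i))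
    · exact ⟨0, Fin.elim0, Fin.elim0, (fun i => i.elim0), (fun i => i.elim0), by simp⟩
    · rintro u1 u2 ⟨n1, w1, z1, hw1, hz1, rfl⟩ ⟨n2, w2, z2, hw2, hz2, rfl⟩
      refine ⟨n1 + n2, Fin.append w1 w2, Fin.append z1 z2, ?_, ?_, ?_⟩
      · intro i
        refine Fin.addCases (fun j => ?_) (fun j => ?_) i
        · simpa using hw1 j
        · simpa using hw2 j
      · intro i
        refine Fin.addCases (fun j => ?_) (fun j => ?_) i
        · simpa using hz1 j
        · simpa using hz2 j
      · rw [Fin.sum_univ_add]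
        congr 1
        · exact Finset.sum_congr rfl fun i _ => by simp
        · exact Finset.sum_congr rfl fun i _ => by simp
    · rintro u v ⟨n, w, z, hw, hz, rfl⟩ hv
      refine ⟨n, w, fun i => z i * v, hw, fun i => I.mul_mem_right _ _ (hz i), ?_⟩
      rw [Finset.sum_mul]
      exact Finset.sum_congr rfl fun i _ => by rw [mul_assoc]
    · rintro u v ⟨n, w, z, hw, hz, rfl⟩ hv
      refine ⟨n, fun i => v * w i, z, fun i => I.mul_mem_left _ _ (hw i), hz, ?_⟩
      rw [Finset.mul_sum]
      exact Finset.sum_congr rfl fun i _ => by noncomm_ring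
  have hr0J2 : r0 ∈ J2 := by
    refine ⟨1, fun _ => r0, fun _ => r0, fun _ => hr0I, fun _ => hr0I, ?_⟩
    rw [Fin.sum_univ_one, hr02, hr02]
  have hqJ2 : q ∈ J2 := by
    rcases hsimp J2 hJ2 with hJ20 | hJ2I
    · exfalso; rw [hJ20] at hr0J2; exact hr0ne hr0J2
    · rw [hJ2I]; exact hqI
  obtain ⟨n, w, z, hw, hz, hrep⟩ := hqJ2
  -- chains
  have hD := chainD xh yh e qe r0 hee hyx hxy hex hxe hye hey heqe hqee hqq hr0def
  have horthall : ∀ a b : ℕ, a ≠ b →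
      (chainP xh yh e a - chainP xh yh e (a+1)) *
        (chainP xh yh e b - chainP xh yh e (b+1)) = 0 := by
    intro a b hab
    rcases lt_or_gt_of_ne hab with hlt | hgt
    · exact (chainOrth xh yh e qe hee hyx hxy hex hxe hye hey heqe hqee a b hlt).1
    · exact (chainOrth xh yh e qe hee hyx hxy hex hxe hye hey heqe hqee b a hgt).2
  set S : ℕ → R := chainS xh yh e r0 with hSdef
  set T : ℕ → R := chainT xh yh e r0 with hTdef
  set rr : ℕ → R := fun k => chainP xh yh e k - chainP xh yh e (k+1) with hrrdef
  have hSh : ∀ k, S k * h = S k := by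
    intro k
    obtain ⟨-, -, -, hsr, -, -⟩ := hD k
    obtain ⟨-, -, hre⟩ := chainR xh yh e qe hee hyx hxy hex hxe hye hey heqe hqee k
    calc S k * h = (S k * rr k) * h := by rw [show S k * rr k = S k from hsr]
      _ = S k * ((rr k * e) * h) := by rw [show rr k * e = rr k from hre]; noncomm_ring
      _ = S k * (rr k * (e * h)) := by rw [mul_assoc]
      _ = S k * (rr k * e) := by rw [heh]
      _ = S k * rr k := by rw [hre]
      _ = S k := hsr
  have hhT : ∀ k, h * T k = T k := by
    intro k
    obtain ⟨-, -, -, -, hrt, -⟩ := hD k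
    obtain ⟨-, her, -⟩ := chainR xh yh e qe hee hyx hxy hex hxe hye hey heqe hqee k
    calc h * T k = h * (rr k * T k) := by rw [show rr k * T k = T k from hrt]
      _ = h * ((e * rr k) * T k) := by rw [her]
      _ = ((h * e) * rr k) * T k := by noncomm_ring
      _ = (e * rr k) * T k := by rw [hhe]
      _ = rr k * T k := by rw [her]
      _ = T k := hrt
  -- the witnesses
  set xs : R := ∑ i : Fin n, q * w i * S i with hxsdef
  set ys : R := ∑ i : Fin n, T i * z i * q with hysdef
  have hqxs : q * xs = xs := by
    rw [hxsdef, Finset.mul_sum]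
    refine Finset.sum_congr rfl fun i _ => ?_
    calc q * (q * w i * S i) = (q * q) * w i * S i := by noncomm_ring
      _ = q * w i * S i := by rw [hq2]
  have hysq : ys * q = ys := by
    rw [hysdef, Finset.sum_mul]
    refine Finset.sum_congr rfl fun i _ => ?_
    calc (T i * z i * q) * q = T i * z i * (q * q) := by noncomm_ring
      _ = T i * z i * q := by rw [hq2]
  have hxsh : xs * h = xs := by
    rw [hxsdef, Finset.sum_mul]
    refine Finset.sum_congr rfl fun i _ => ?_
    calc (q * w i * S i) * h = q * w i * (S i * h) := by noncomm_ring
      _ = q * w i * S i := by rw [hSh]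
  have hhys : h * ys = ys := by
    rw [hysdef, Finset.mul_sum]
    refine Finset.sum_congr rfl fun i _ => ?_
    calc h * (T i * z i * q) = (h * T i) * (z i * q) := by noncomm_ring
      _ = T i * (z i * q) := by rw [hhT]
      _ = T i * z i * q := by rw [mul_assoc]
  have hST : ∀ a b : ℕ, a ≠ b → S a * T b = 0 := by
    intro a b hab
    obtain ⟨-, -, -, hsra, -, -⟩ := hD a
    obtain ⟨-, -, -, -, hrtb, -⟩ := hD b
    calc S a * T b = (S a * rr a) * (rr b * T b) := by rw [show S a * rr a = S a from hsra,
        show rr b * T b = T b from hrtb]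
      _ = S a * ((rr a * rr b) * T b) := by noncomm_ring
      _ = S a * (0 * T b) := by rw [horthall a b hab]
      _ = 0 := by rw [zero_mul, mul_zero]
  have hmain : xs * ys = q := by
    rw [hxsdef, hysdef, Finset.sum_mul_sum]
    have hterm : ∀ i : Fin n, ∑ j : Fin n, (q * w i * S i) * (T j * z j * q)
        = q * (w i * r0 * z i) * q := by
      intro i
      rw [Finset.sum_eq_single i]
      · obtain ⟨hst, -, -, -, -, -⟩ := hD i
        calc (q * w i * S i) * (T i * z i * q)
            = (q * w i) * ((S i * T i) * (z i * q)) := by noncomm_ring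
          _ = (q * w i) * (r0 * (z i * q)) := by rw [hst]
          _ = q * (w i * r0 * z i) * q := by noncomm_ring
      · intro j _ hji
        have : S (i : ℕ) * T (j : ℕ) = 0 := hST i j (fun hc => hji (Fin.ext hc.symm))
        calc (q * w i * S i) * (T j * z j * q)
            = (q * w i) * ((S i * T j) * (z j * q)) := by noncomm_ring
          _ = (q * w i) * (0 * (z j * q)) := by rw [this]
          _ = 0 := by rw [zero_mul, mul_zero]
      · intro hni; exact absurd (Finset.mem_univ i) hni
    calc (∑ i : Fin n, ∑ j : Fin n, (q * w i * S i) * (T j * z j * q))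
        = ∑ i : Fin n, q * (w i * r0 * z i) * q := Finset.sum_congr rfl fun i _ => hterm i
      _ = (∑ i : Fin n, q * (w i * r0 * z i)) * q := by rw [Finset.sum_mul]
      _ = (q * ∑ i : Fin n, w i * r0 * z i) * q := by rw [Finset.mul_sum]
      _ = (q * q) * q := by rw [← hrep]
      _ = q := by rw [hq2, hq2]
  refine ⟨xs, ys, ys * xs, hmain, ?_, ?_, ?_, ?_, ?_⟩
  · rw [mul_assoc, hxsh]
  · rw [← mul_assoc, hhys]
  · rw [← mul_assoc, hmain, hqxs]
  · rw [mul_assoc, hmain, hysq]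
  · exact hysq

end QBaux


/-- A purely infinite simple exchange ideal of a unital ring `R` is a QB-ideal of `R`. -/
theorem pis_exchange_ideal_is_QBIdeal (I : TwoSidedIdeal R)
    (hPIS : IsPISIdeal (I : Set R)) (hEx : IsExchangeIdeal (I : Set R)) :
    ∀ x a b : R, x ∈ I → a ∈ I → b ∈ I → x * a - x - a + b = 0 →
      ∃ y ∈ I, QuasiInv (1 - (a - y * b)) := by
  intro x a b hxI haI hbI hrel
  have hXA : (1 - x) * (1 - a) = 1 - b := by
    have h1 : x * a = x + a - b := by
      have h3 : x * a - (x + a - b) = 0 := by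
        rw [show x * a - (x + a - b) = x * a - x - a + b from by noncomm_ring, hrel]
      exact sub_eq_zero.mp h3
    calc (1 - x) * (1 - a) = 1 - a - x + x * a := by noncomm_ring
      _ = 1 - a - x + (x + a - b) := by rw [h1]
      _ = 1 - b := by abel
  -- exchange at b, with normalizations
  obtain ⟨p, s0, hs0I, hpdef, hp2, t0, ht0I, hpbt⟩ := hEx b hbI
  have hpI : p ∈ I := by
    rw [hpdef]; exact I.sub_mem (I.add_mem hbI hs0I) (I.mul_mem_left b s0 hs0I)
  set t : R := t0 * p with htdef
  set s : R := s0 + p - s0 * p with hsdef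
  have htI : t ∈ I := I.mul_mem_right t0 p ht0I
  have hsI : s ∈ I := I.sub_mem (I.add_mem hs0I hpI) (I.mul_mem_right s0 p hs0I)
  have hbt : b * t = p := by rw [htdef, ← mul_assoc, ← hpbt, hp2]
  have hte : t * p = t := by rw [htdef, mul_assoc, hp2]
  have hse : s * p = p := by
    rw [hsdef]
    calc (s0 + p - s0 * p) * p = s0 * p + p * p - s0 * (p * p) := by noncomm_ring
      _ = s0 * p + p - s0 * p := by rw [hp2]
      _ = p := by abel
  have hbs : b * s = b + s - p := by
    have h1 : b * s0 = b + s0 - p := by rw [hpdef]; noncomm_ring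
    rw [hsdef]
    calc b * (s0 + p - s0 * p) = b * s0 + b * p - (b * s0) * p := by noncomm_ring
      _ = (b + s0 - p) + b * p - ((b + s0 - p) * p) := by rw [h1]
      _ = (b + s0 - p) + b * p - (b * p + s0 * p - p * p) := by noncomm_ring
      _ = b + (s0 + p - s0 * p) - p := by rw [hp2]; abel
  -- the Nicholson-type idempotent
  set α : R := b + s + t - s * b - t * b with hαdef
  set β : R := 1 + b - s * b - t * b with hβdef
  set qq : R := α * b with hqqdef
  have hαI : α ∈ I :=
    I.sub_mem (I.sub_mem (I.add_mem (I.add_mem hbI hsI) htI)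
      (I.mul_mem_right s b hsI)) (I.mul_mem_right t b htI)
  have hqqI : qq ∈ I := I.mul_mem_right α b hαI
  have hba : b * α = b + s - s * b := by
    rw [hαdef]
    calc b * (b + s + t - s * b - t * b)
        = b * b + b * s + b * t - (b * s) * b - (b * t) * b := by noncomm_ring
      _ = b * b + (b + s - p) + p - (b + s - p) * b - p * b := by rw [hbs, hbt]
      _ = b + s - s * b := by noncomm_ring
  have hαE : α * ((1 - s) * (1 - b)) = 0 := by
    have hdec : α = s + (1 - s) * b + t * (1 - b) := by rw [hαdef]; noncomm_ring
    have hBS : (1 - b) * (1 - s) = 1 - p := by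
      calc (1 - b) * (1 - s) = 1 - s - b + b * s := by noncomm_ring
        _ = 1 - s - b + (b + s - p) := by rw [hbs]
        _ = 1 - p := by abel
    have h1 : t * (1 - b) * ((1 - s) * (1 - b)) = 0 := by
      calc t * (1 - b) * ((1 - s) * (1 - b))
          = t * (((1 - b) * (1 - s)) * (1 - b)) := by noncomm_ring
        _ = t * ((1 - p) * (1 - b)) := by rw [hBS]
        _ = (t * (1 - p)) * (1 - b) := by rw [← mul_assoc]
        _ = (t - t * p) * (1 - b) := by noncomm_ring
        _ = (t - t) * (1 - b) := by rw [hte]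
        _ = 0 := by rw [sub_self, zero_mul]
    have h2 : b * (1 - s) = p - s := by
      calc b * (1 - s) = b - b * s := by noncomm_ring
        _ = b - (b + s - p) := by rw [hbs]
        _ = p - s := by abel
    have h3 : (1 - s) * (p - s) = s * s - s := by
      calc (1 - s) * (p - s) = p - s - s * p + s * s := by noncomm_ring
        _ = p - s - p + s * s := by rw [hse]
        _ = s * s - s := by abel
    have h4 : (1 - s) * b * ((1 - s) * (1 - b)) = (s * s - s) * (1 - b) := by
      calc (1 - s) * b * ((1 - s) * (1 - b))
          = ((1 - s) * (b * (1 - s))) * (1 - b) := by noncomm_ring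
        _ = ((1 - s) * (p - s)) * (1 - b) := by rw [h2]
        _ = (s * s - s) * (1 - b) := by rw [h3]
    have h5 : s * ((1 - s) * (1 - b)) = (s - s * s) * (1 - b) := by noncomm_ring
    calc α * ((1 - s) * (1 - b))
        = s * ((1 - s) * (1 - b)) + (1 - s) * b * ((1 - s) * (1 - b))
            + t * (1 - b) * ((1 - s) * (1 - b)) := by rw [hdec]; noncomm_ring
      _ = (s - s * s) * (1 - b) + (s * s - s) * (1 - b) + 0 := by rw [h5, h4, h1]
      _ = 0 := by noncomm_ring
  have hq2 : qq * qq = qq := by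
    rw [hqqdef]
    calc (α * b) * (α * b) = α * (b * α) * b := by noncomm_ring
      _ = α * (b + s - s * b) * b := by rw [hba]
      _ = α * b - α * ((1 - s) * (1 - b)) * b := by noncomm_ring
      _ = α * b - 0 * b := by rw [hαE]
      _ = α * b := by noncomm_ring
  have hcompl : β * (1 - b) = 1 - qq := by rw [hβdef, hqqdef, hαdef]; noncomm_ring
  -- the regular element W and its inner inverse v
  set X : R := 1 - x with hXdef
  set A : R := 1 - a with hAdef
  set W : R := A * (1 - qq) with hWdef
  set v : R := (1 - qq) * (β * X) with hvdef
  have hc'A : (β * X) * A = 1 - qq := by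
    calc (β * X) * A = β * (X * A) := by rw [mul_assoc]
      _ = β * (1 - b) := by rw [hXdef, hAdef, hXA]
      _ = 1 - qq := hcompl
  have h1q : (1 - qq) * (1 - qq) = 1 - qq := by
    calc (1 - qq) * (1 - qq) = 1 - qq - qq + qq * qq := by noncomm_ring
      _ = 1 - qq - qq + qq := by rw [hq2]
      _ = 1 - qq := by abel
  have hvW : v * W = 1 - qq := by
    calc v * W = (1 - qq) * ((β * X) * A) * (1 - qq) := by rw [hvdef, hWdef]; noncomm_ring
      _ = (1 - qq) * (1 - qq) * (1 - qq) := by rw [hc'A]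
      _ = 1 - qq := by rw [h1q, h1q]
  have hWq : W * qq = 0 := by
    calc W * qq = A * (qq - qq * qq) := by rw [hWdef]; noncomm_ring
      _ = A * 0 := by rw [hq2, sub_self]
      _ = 0 := mul_zero A
  set f : R := W * v with hfdef
  have hfW : f * W = W := by
    calc f * W = W * (v * W) := by rw [hfdef, mul_assoc]
      _ = W * (1 - qq) := by rw [hvW]
      _ = W - W * qq := by noncomm_ring
      _ = W := by rw [hWq, sub_zero]
  have hvf : v * f = v := by
    calc v * f = (v * W) * v := by rw [hfdef, ← mul_assoc]
      _ = (1 - qq) * v := by rw [hvW]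
      _ = (1 - qq) * ((1 - qq) * (β * X)) := by rw [hvdef]
      _ = ((1 - qq) * (1 - qq)) * (β * X) := by rw [← mul_assoc]
      _ = (1 - qq) * (β * X) := by rw [h1q]
      _ = v := by rw [hvdef]
  have hff : f * f = f := by
    calc f * f = (W * (v * W)) * v := by rw [hfdef]; noncomm_ring
      _ = (W * (1 - qq)) * v := by rw [hvW]
      _ = (W - W * qq) * v := by noncomm_ring
      _ = W * v := by rw [hWq]; noncomm_ring
      _ = f := hfdef.symm
  set y0 : R := -(A * α) with hy0def
  have hy0I : y0 ∈ I := I.neg_mem (I.mul_mem_left A α hαI)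
  have hWform : W = 1 - (a - y0 * b) := by
    rw [hWdef, hqqdef, hy0def, hAdef]; noncomm_ring
  have hmul : ∀ u w : R, u - 1 ∈ I → w - 1 ∈ I → u * w - 1 ∈ I := by
    intro u w hu hw
    have : u * w - 1 = u * (w - 1) + (u - 1) := by noncomm_ring
    rw [this]
    exact I.add_mem (I.mul_mem_left u (w - 1) hw) hu
  have hWi : W - 1 ∈ I := by
    rw [hWform]
    rw [show (1 - (a - y0 * b)) - 1 = -(a - y0 * b) from by noncomm_ring]
    exact I.neg_mem (I.sub_mem haI (I.mul_mem_right y0 b hy0I))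
  have hvi : v - 1 ∈ I := by
    have hβi : β - 1 ∈ I := by
      rw [hβdef, show (1 + b - s * b - t * b) - 1 = b - s * b - t * b from by noncomm_ring]
      exact I.sub_mem (I.sub_mem hbI (I.mul_mem_right s b hsI)) (I.mul_mem_right t b htI)
    have hXi : X - 1 ∈ I := by
      rw [hXdef, show (1 : R) - x - 1 = -x from by noncomm_ring]
      exact I.neg_mem hxI
    have h1qi : (1 - qq) - 1 ∈ I := by
      rw [show (1 : R) - qq - 1 = -qq from by noncomm_ring]
      exact I.neg_mem hqqI
    rw [hvdef]
    exact hmul _ _ h1qi (hmul _ _ hβi hXi)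
  have hfi : 1 - f ∈ I := by
    have hfm : f - 1 ∈ I := by
      rw [hfdef]; exact hmul _ _ hWi hvi
    rw [show (1 : R) - f = -(f - 1) from by noncomm_ring]
    exact I.neg_mem hfm
  by_cases hf1 : (1 : R) - f = 0
  · -- W itself is right invertible
    refine ⟨y0, hy0I, ?_⟩
    rw [← hWform]
    have hWv1 : W * v = 1 := by
      rw [← hfdef]; exact (sub_eq_zero.mp hf1).symm
    exact quasiInv_of_right_inv hWv1
  · -- comparability case: complete W to a left invertible element
    have hh2 : (1 - f) * (1 - f) = 1 - f := by
      calc (1 - f) * (1 - f) = 1 - f - f + f * f := by noncomm_ring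
        _ = 1 - f - f + f := by rw [hff]
        _ = 1 - f := by abel
    obtain ⟨xc, yc, g, hxcyc, hgh, hhg, hxcg, hgyc, hycq⟩ :=
      QBaux.pis_comparability I hPIS (1 - f) qq hfi hh2 hf1 hqqI hq2
    have hgI : g ∈ I := by rw [← hhg]; exact I.mul_mem_right (1 - f) g hfi
    have hycI : yc ∈ I := by rw [← hgyc]; exact I.mul_mem_right g yc hgI
    have hvg : v * g = 0 := by
      calc v * g = v * ((1 - f) * g) := by rw [hhg]
        _ = (v - v * f) * g := by noncomm_ring
        _ = (v - v) * g := by rw [hvf]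
        _ = 0 := by rw [sub_self, zero_mul]
    have hgW : g * W = 0 := by
      have hgf : g * f = 0 := by
        calc g * f = (g * (1 - f)) * f := by rw [hgh]
          _ = g * ((1 - f) * f) := by rw [mul_assoc]
          _ = g * (f - f * f) := by noncomm_ring
          _ = g * 0 := by rw [hff, sub_self]
          _ = 0 := mul_zero g
      calc g * W = g * (f * W) := by rw [hfW]
        _ = (g * f) * W := by rw [← mul_assoc]
        _ = 0 := by rw [hgf, zero_mul]
    have hvyc : v * yc = 0 := by
      calc v * yc = v * (g * yc) := by rw [hgyc]
        _ = (v * g) * yc := by rw [← mul_assoc]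
        _ = 0 := by rw [hvg, zero_mul]
    have hxcW : xc * W = 0 := by
      calc xc * W = (xc * g) * W := by rw [hxcg]
        _ = xc * (g * W) := by rw [mul_assoc]
        _ = 0 := by rw [hgW, mul_zero]
    have hunit : (v + xc) * (W + yc) = 1 := by
      calc (v + xc) * (W + yc) = v * W + v * yc + xc * W + xc * yc := by noncomm_ring
        _ = (1 - qq) + 0 + 0 + qq := by rw [hvW, hvyc, hxcW, hxcyc]
        _ = 1 := by abel
    set y1 : R := yc * α with hy1def
    have hy1I : y1 ∈ I := I.mul_mem_right yc α hycI
    have hycb : yc = y1 * b := by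
      calc yc = yc * qq := hycq.symm
        _ = yc * (α * b) := by rw [hqqdef]
        _ = (yc * α) * b := by rw [← mul_assoc]
    refine ⟨y0 + y1, I.add_mem hy0I hy1I, ?_⟩
    have hform : 1 - (a - (y0 + y1) * b) = W + yc := by
      rw [hWform, hycb]; noncomm_ring
    rw [hform]
    exact quasiInv_of_left_inv hunit


end
end

section
/- Let R be a unital ring, u ∈ R quasi-invertible with quasi-inverse v, p = uv, q = vu, and let w ∈ qRq be quasi-invertible in the corner ring qRq with quasi-inverse w' ∈ qRq. Set p₁ = 1-p, p₂ = p - uww'v, q₁ = q - w'w, q₂ = 1-q. Suppose t₁ ∈ p₁Rq₁ is quasi-invertible in the skew corner p₁Rq₁ (with quasi-inverse t₁' ∈ q₁Rp₁) and t₂ ∈ p₂Rq₂ is quasi-invertible in p₂Rq₂ (with quasi-inverse t₂' ∈ q₂Rp₂). Then a = uw + t₁ + t₂ is quasi-invertible in R, with quasi-inverse a' = w'v + t₁' + t₂'. -/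
section
variable {R : Type*} [Ring R]

/-- If `α R β = 0`, then any elements of `R α R` and `R β R` multiply to zero
through an arbitrary middle factor. -/
lemma orth_conj {α β α' β' a b c d : R}
    (h : ∀ r : R, α * r * β = 0) (hα : α' = a * α * b) (hβ : β' = c * β * d)
    (r : R) : α' * r * β' = 0 := by
  rw [hα, hβ]
  have e : a * α * b * r * (c * β * d) = a * (α * (b * r * c) * β) * d := by noncomm_ring
  rw [e, h, mul_zero, zero_mul]

/-- Lemma 1.3(i): with `u` quasi-invertible with quasi-inverse `v`, `p = uv`, `q = vu`,
`w ∈ (qRq)_q⁻¹` with quasi-inverse `w'`, and `t₁ ∈ (p₁Rq₁)_q⁻¹`, `t₂ ∈ (p₂Rq₂)_q⁻¹`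
(where `p₁ = 1-p`, `p₂ = p - uww'v`, `q₁ = q - w'w`, `q₂ = 1-q`), the element
`a = uw + t₁ + t₂` is quasi-invertible in `R` with quasi-inverse `a' = w'v + t₁' + t₂'`. -/
theorem quasiInvertible_sum (u v w w' t₁ t₁' t₂ t₂' : R)
    (huv : CentOrth (1 - u * v) (1 - v * u))
    (hu : u = u * v * u) (hv : v = v * u * v)
    (hw : w = (v * u) * w * (v * u)) (hw' : w' = (v * u) * w' * (v * u))
    (hww : w = w * w' * w) (hww' : w' = w' * w * w')
    (hworth : CentOrth (v * u - w * w') (v * u - w' * w))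
    (ht₁ : t₁ = (1 - u * v) * t₁ * (v * u - w' * w))
    (ht₁' : t₁' = (v * u - w' * w) * t₁' * (1 - u * v))
    (ht₁r : t₁ = t₁ * t₁' * t₁) (ht₁r' : t₁' = t₁' * t₁ * t₁')
    (h₁orth : CentOrth ((1 - u * v) - t₁ * t₁') ((v * u - w' * w) - t₁' * t₁))
    (ht₂ : t₂ = (u * v - u * w * w' * v) * t₂ * (1 - v * u))
    (ht₂' : t₂' = (1 - v * u) * t₂' * (u * v - u * w * w' * v))
    (ht₂r : t₂ = t₂ * t₂' * t₂) (ht₂r' : t₂' = t₂' * t₂ * t₂')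
    (h₂orth : CentOrth ((u * v - u * w * w' * v) - t₂ * t₂') ((1 - v * u) - t₂' * t₂)) :
    CentOrth (1 - (u * w + t₁ + t₂) * (w' * v + t₁' + t₂'))
      (1 - (w' * v + t₁' + t₂') * (u * w + t₁ + t₂)) := by
  -- basic idempotent / absorption facts
  have hq : v * u * (v * u) = v * u := by rw [← mul_assoc, ← hv]
  have hp : u * v * (u * v) = u * v := by rw [← mul_assoc, ← hu]
  have hwq : w * (v * u) = w := by
    conv_lhs => rw [hw]
    rw [mul_assoc (v * u * w), hq, ← hw]
  have hqw : v * u * w = w := by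
    conv_lhs => rw [hw]
    have e : v * u * (v * u * w * (v * u)) = v * u * (v * u) * w * (v * u) := by noncomm_ring
    rw [e, hq, ← hw]
  have hw'q : w' * (v * u) = w' := by
    conv_lhs => rw [hw']
    rw [mul_assoc (v * u * w'), hq, ← hw']
  have hqw' : v * u * w' = w' := by
    conv_lhs => rw [hw']
    have e : v * u * (v * u * w' * (v * u)) = v * u * (v * u) * w' * (v * u) := by noncomm_ring
    rw [e, hq, ← hw']
  -- elementwise zero products
  have m1 : w * (v * u - w' * w) = 0 := by
    rw [mul_sub, hwq, ← mul_assoc, ← hww, sub_self]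
  have m2 : w * (1 - v * u) = 0 := by rw [mul_sub, mul_one, hwq, sub_self]
  have m3 : (v * u - w' * w) * w' = 0 := by rw [sub_mul, hqw', mul_assoc, ← mul_assoc w', ← hww', sub_self]
  have m4 : (v * u - w' * w) * (1 - v * u) = 0 := by
    have e : (v * u - w' * w) * (1 - v * u)
        = (v * u - v * u * (v * u)) - (w' * w - w' * (w * (v * u))) := by noncomm_ring
    rw [e, hq, hwq]; simp
  have m5 : (1 - v * u) * w' = 0 := by rw [sub_mul, one_mul, hqw', sub_self]
  have m6 : (1 - v * u) * (v * u - w' * w) = 0 := by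
    have e : (1 - v * u) * (v * u - w' * w)
        = (v * u - v * u * (v * u)) - (w' * w - (v * u * w') * w) := by noncomm_ring
    rw [e, hq, hqw']; simp
  have m7 : w' * v * (1 - u * v) = 0 := by
    have e : w' * v * (1 - u * v) = w' * v - w' * (v * u * v) := by noncomm_ring
    rw [e, ← hv, sub_self]
  have m8 : w' * v * (u * v - u * w * w' * v) = 0 := by
    have e : w' * v * (u * v - u * w * w' * v)
        = w' * (v * u * v) - (w' * (v * u * w)) * (w' * v) := by noncomm_ring
    rw [e, ← hv, hqw]
    have e2 : w' * w * (w' * v) = (w' * w * w') * v := by noncomm_ring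
    rw [e2, ← hww', sub_self]
  have m9 : (1 - u * v) * u = 0 := by rw [sub_mul, one_mul, ← hu, sub_self]
  have m10 : (1 - u * v) * (u * v - u * w * w' * v) = 0 := by
    have e : (1 - u * v) * (u * v - u * w * w' * v)
        = (u * v - u * v * (u * v)) - (u * (w * (w' * v)) - (u * v * u) * (w * (w' * v))) := by
      noncomm_ring
    rw [e, hp, ← hu]; simp
  have m11 : (u * v - u * w * w' * v) * (u * w) = 0 := by
    have e : (u * v - u * w * w' * v) * (u * w)
        = (u * v * u) * w - (u * (w * w')) * (v * u * w) := by noncomm_ring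
    rw [e, ← hu, hqw]
    have e2 : u * (w * w') * w = u * (w * w' * w) := by noncomm_ring
    rw [e2, ← hww, sub_self]
  have m12 : (u * v - u * w * w' * v) * (1 - u * v) = 0 := by
    have e : (u * v - u * w * w' * v) * (1 - u * v)
        = (u * v - u * v * (u * v)) - (u * (w * (w' * v)) - u * (w * (w' * (v * u * v)))) := by
      noncomm_ring
    rw [e, hp, ← hv]; simp
  -- cross terms in a * a'
  have z1 : u * w * t₁' = 0 := by
    conv_lhs => rw [ht₁']
    have e : u * w * ((v * u - w' * w) * t₁' * (1 - u * v))
        = u * (w * (v * u - w' * w)) * (t₁' * (1 - u * v)) := by noncomm_ring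
    rw [e, m1]; simp
  have z2 : u * w * t₂' = 0 := by
    conv_lhs => rw [ht₂']
    have e : u * w * ((1 - v * u) * t₂' * (u * v - u * w * w' * v))
        = u * (w * (1 - v * u)) * (t₂' * (u * v - u * w * w' * v)) := by noncomm_ring
    rw [e, m2]; simp
  have z3 : t₁ * (w' * v) = 0 := by
    conv_lhs => rw [ht₁]
    have e : (1 - u * v) * t₁ * (v * u - w' * w) * (w' * v)
        = (1 - u * v) * t₁ * ((v * u - w' * w) * w') * v := by noncomm_ring
    rw [e, m3]; simp
  have z4 : t₁ * t₂' = 0 := by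
    conv_lhs => rw [ht₁, ht₂']
    have e : (1 - u * v) * t₁ * (v * u - w' * w) * ((1 - v * u) * t₂' * (u * v - u * w * w' * v))
        = ((1 - u * v) * t₁) * ((v * u - w' * w) * (1 - v * u)) * (t₂' * (u * v - u * w * w' * v)) := by
      noncomm_ring
    rw [e, m4]; simp
  have z5 : t₂ * (w' * v) = 0 := by
    conv_lhs => rw [ht₂]
    have e : (u * v - u * w * w' * v) * t₂ * (1 - v * u) * (w' * v)
        = (u * v - u * w * w' * v) * t₂ * ((1 - v * u) * w') * v := by noncomm_ring
    rw [e, m5]; simp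
  have z6 : t₂ * t₁' = 0 := by
    conv_lhs => rw [ht₂, ht₁']
    have e : (u * v - u * w * w' * v) * t₂ * (1 - v * u) * ((v * u - w' * w) * t₁' * (1 - u * v))
        = ((u * v - u * w * w' * v) * t₂) * ((1 - v * u) * (v * u - w' * w)) * (t₁' * (1 - u * v)) := by
      noncomm_ring
    rw [e, m6]; simp
  -- cross terms in a' * a
  have z7 : w' * v * t₁ = 0 := by
    conv_lhs => rw [ht₁]
    have e : w' * v * ((1 - u * v) * t₁ * (v * u - w' * w))
        = (w' * v * (1 - u * v)) * (t₁ * (v * u - w' * w)) := by noncomm_ring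
    rw [e, m7]; simp
  have z8 : w' * v * t₂ = 0 := by
    conv_lhs => rw [ht₂]
    have e : w' * v * ((u * v - u * w * w' * v) * t₂ * (1 - v * u))
        = (w' * v * (u * v - u * w * w' * v)) * (t₂ * (1 - v * u)) := by noncomm_ring
    rw [e, m8]; simp
  have z9 : t₁' * (u * w) = 0 := by
    conv_lhs => rw [ht₁']
    have e : (v * u - w' * w) * t₁' * (1 - u * v) * (u * w)
        = (v * u - w' * w) * t₁' * (((1 - u * v) * u) * w) := by noncomm_ring
    rw [e, m9]; simp
  have z10 : t₁' * t₂ = 0 := by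
    conv_lhs => rw [ht₁', ht₂]
    have e : (v * u - w' * w) * t₁' * (1 - u * v) * ((u * v - u * w * w' * v) * t₂ * (1 - v * u))
        = ((v * u - w' * w) * t₁') * ((1 - u * v) * (u * v - u * w * w' * v)) * (t₂ * (1 - v * u)) := by
      noncomm_ring
    rw [e, m10]; simp
  have z11 : t₂' * (u * w) = 0 := by
    conv_lhs => rw [ht₂']
    have e : (1 - v * u) * t₂' * (u * v - u * w * w' * v) * (u * w)
        = (1 - v * u) * t₂' * ((u * v - u * w * w' * v) * (u * w)) := by noncomm_ring
    rw [e, m11]; simp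
  have z12 : t₂' * t₁ = 0 := by
    conv_lhs => rw [ht₂', ht₁]
    have e : (1 - v * u) * t₂' * (u * v - u * w * w' * v) * ((1 - u * v) * t₁ * (v * u - w' * w))
        = ((1 - v * u) * t₂') * ((u * v - u * w * w' * v) * (1 - u * v)) * (t₁ * (v * u - w' * w)) := by
      noncomm_ring
    rw [e, m12]; simp
  have zd : w' * v * (u * w) = w' * w := by
    have e : w' * v * (u * w) = w' * (v * u * w) := by noncomm_ring
    rw [e, hqw]
  -- decompositions of 1 - a a' and 1 - a' a
  have hXeq : 1 - (u * w + t₁ + t₂) * (w' * v + t₁' + t₂')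
      = ((1 - u * v) - t₁ * t₁') + ((u * v - u * w * w' * v) - t₂ * t₂') := by
    have e : (u * w + t₁ + t₂) * (w' * v + t₁' + t₂')
        = u * w * (w' * v) + u * w * t₁' + u * w * t₂' + t₁ * (w' * v) + t₁ * t₁' + t₁ * t₂'
          + t₂ * (w' * v) + t₂ * t₁' + t₂ * t₂' := by noncomm_ring
    rw [e, z1, z2, z3, z4, z5, z6]
    noncomm_ring
  have hYeq : 1 - (w' * v + t₁' + t₂') * (u * w + t₁ + t₂)
      = ((v * u - w' * w) - t₁' * t₁) + ((1 - v * u) - t₂' * t₂) := by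
    have e : (w' * v + t₁' + t₂') * (u * w + t₁ + t₂)
        = w' * v * (u * w) + w' * v * t₁ + w' * v * t₂ + t₁' * (u * w) + t₁' * t₁ + t₁' * t₂
          + t₂' * (u * w) + t₂' * t₁ + t₂' * t₂ := by noncomm_ring
    rw [e, zd, z7, z8, z9, z10, z11, z12]
    noncomm_ring
  -- sandwich representations
  have rE : ∀ x : R, x = 1 * x * 1 := fun x => by rw [one_mul, mul_one]
  have i1 : u * (v * u - w * w') * v = u * v - u * w * w' * v := by
    have e : u * (v * u - w * w') * v = (u * v * u) * v - u * w * w' * v := by noncomm_ring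
    rw [e, ← hu]
  have p1 : t₁ * t₁' = (t₁ * ((v * u - w' * w) * t₁')) * (1 - u * v) * 1 := by
    conv_lhs => rw [ht₁']
    noncomm_ring
  have p3 : t₁' * t₁ = (t₁' * ((1 - u * v) * t₁)) * (v * u - w' * w) * 1 := by
    conv_lhs => rw [ht₁]
    noncomm_ring
  have p5 : t₂ * t₂' = (t₂ * ((1 - v * u) * t₂') * u) * (v * u - w * w') * v := by
    conv_lhs => rw [ht₂', ← i1]
    noncomm_ring
  have p7 : t₂' * t₂ = 1 * (1 - v * u) * (t₂' * (u * v - u * w * w' * v) * t₂) := by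
    conv_lhs => rw [ht₂']
    noncomm_ring
  have huv1 : ∀ r : R, (1 - u * v) * r * (1 - v * u) = 0 := fun r => (huv r).1
  have huv2 : ∀ r : R, (1 - v * u) * r * (1 - u * v) = 0 := fun r => (huv r).2
  have hwo1 : ∀ r : R, (v * u - w * w') * r * (v * u - w' * w) = 0 := fun r => (hworth r).1
  have hwo2 : ∀ r : R, (v * u - w' * w) * r * (v * u - w * w') = 0 := fun r => (hworth r).2
  intro r
  -- cross orthogonality terms
  have cXY₂ : ((1 - u * v) - t₁ * t₁') * r * ((1 - v * u) - t₂' * t₂) = 0 := by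
    have e : ((1 - u * v) - t₁ * t₁') * r * ((1 - v * u) - t₂' * t₂)
        = (1 - u * v) * r * (1 - v * u) - (1 - u * v) * r * (t₂' * t₂)
          - (t₁ * t₁') * r * (1 - v * u) + (t₁ * t₁') * r * (t₂' * t₂) := by noncomm_ring
    rw [e, huv1 r, orth_conj huv1 (rE _) p7 r, orth_conj huv1 p1 (rE _) r,
      orth_conj huv1 p1 p7 r]
    simp
  have cY₂X : ((1 - v * u) - t₂' * t₂) * r * ((1 - u * v) - t₁ * t₁') = 0 := by
    have e : ((1 - v * u) - t₂' * t₂) * r * ((1 - u * v) - t₁ * t₁')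
        = (1 - v * u) * r * (1 - u * v) - (1 - v * u) * r * (t₁ * t₁')
          - (t₂' * t₂) * r * (1 - u * v) + (t₂' * t₂) * r * (t₁ * t₁') := by noncomm_ring
    rw [e, huv2 r, orth_conj huv2 (rE _) p1 r, orth_conj huv2 p7 (rE _) r,
      orth_conj huv2 p7 p1 r]
    simp
  have cX₂Y₁ : ((u * v - u * w * w' * v) - t₂ * t₂') * r * ((v * u - w' * w) - t₁' * t₁) = 0 := by
    have e : ((u * v - u * w * w' * v) - t₂ * t₂') * r * ((v * u - w' * w) - t₁' * t₁)
        = (u * v - u * w * w' * v) * r * (v * u - w' * w)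
          - (u * v - u * w * w' * v) * r * (t₁' * t₁)
          - (t₂ * t₂') * r * (v * u - w' * w) + (t₂ * t₂') * r * (t₁' * t₁) := by noncomm_ring
    rw [e, orth_conj hwo1 i1.symm (rE _) r, orth_conj hwo1 i1.symm p3 r,
      orth_conj hwo1 p5 (rE _) r, orth_conj hwo1 p5 p3 r]
    simp
  have cY₁X₂ : ((v * u - w' * w) - t₁' * t₁) * r * ((u * v - u * w * w' * v) - t₂ * t₂') = 0 := by
    have e : ((v * u - w' * w) - t₁' * t₁) * r * ((u * v - u * w * w' * v) - t₂ * t₂')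
        = (v * u - w' * w) * r * (u * v - u * w * w' * v)
          - (v * u - w' * w) * r * (t₂ * t₂')
          - (t₁' * t₁) * r * (u * v - u * w * w' * v) + (t₁' * t₁) * r * (t₂ * t₂') := by
      noncomm_ring
    rw [e, orth_conj hwo2 (rE _) i1.symm r, orth_conj hwo2 (rE _) p5 r,
      orth_conj hwo2 p3 i1.symm r, orth_conj hwo2 p3 p5 r]
    simp
  constructor
  · rw [hXeq, hYeq]
    have e : (((1 - u * v) - t₁ * t₁') + ((u * v - u * w * w' * v) - t₂ * t₂')) * r
          * ((((v * u - w' * w) - t₁' * t₁)) + ((1 - v * u) - t₂' * t₂))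
        = ((1 - u * v) - t₁ * t₁') * r * ((v * u - w' * w) - t₁' * t₁)
          + ((1 - u * v) - t₁ * t₁') * r * ((1 - v * u) - t₂' * t₂)
          + ((u * v - u * w * w' * v) - t₂ * t₂') * r * ((v * u - w' * w) - t₁' * t₁)
          + ((u * v - u * w * w' * v) - t₂ * t₂') * r * ((1 - v * u) - t₂' * t₂) := by
      noncomm_ring
    rw [e, (h₁orth r).1, cXY₂, cX₂Y₁, (h₂orth r).1]
    simp
  · rw [hXeq, hYeq]
    have e : ((((v * u - w' * w) - t₁' * t₁)) + ((1 - v * u) - t₂' * t₂)) * r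
          * (((1 - u * v) - t₁ * t₁') + ((u * v - u * w * w' * v) - t₂ * t₂'))
        = ((v * u - w' * w) - t₁' * t₁) * r * ((1 - u * v) - t₁ * t₁')
          + ((v * u - w' * w) - t₁' * t₁) * r * ((u * v - u * w * w' * v) - t₂ * t₂')
          + ((1 - v * u) - t₂' * t₂) * r * ((1 - u * v) - t₁ * t₁')
          + ((1 - v * u) - t₂' * t₂) * r * ((u * v - u * w * w' * v) - t₂ * t₂') := by
      noncomm_ring
    rw [e, (h₁orth r).2, cY₁X₂, cY₂X, (h₂orth r).2]
    simp

end
end
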